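/- arXiv:math/0603097 — 5 statements merged into one kernel-verified Lean document; each statement's English description precedes it below -/
import Mathlib

section
/- Milnor's Lobachevsky function Л is continuous on ℝ, odd (Л(−x) = −Л(x) for all x ∈ ℝ), and π-periodic (Л(x+π) = Л(x) for all x ∈ ℝ). -/
open Real

/-- Milnor's Lobachevsky function `Л(x) = -∫₀ˣ log |2 sin t| dt`. -/
noncomputable def lob (x : ℝ) : ℝ := -∫ t in (0:ℝ)..x, Real.log |2 * Real.sin t|

namespace LobAux

open MeasureTheory Set intervalIntegral

/-- The integrand of the Lobachevsky function. -/
noncomputable def f (t : ℝ) : ℝ := Real.log |2 * Real.sin t|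

lemma f_even (t : ℝ) : f (-t) = f t := by
  simp [f, abs_mul]

lemma f_periodic : Function.Periodic f π := by
  intro t
  simp [f, Real.sin_add_pi, abs_mul]

lemma f_reflect (t : ℝ) : f (π - t) = f t := by
  simp [f, Real.sin_pi_sub]

lemma f_aesm (μ : Measure ℝ) : AEStronglyMeasurable f μ :=
  (Real.measurable_log.comp
    ((continuous_abs.comp (continuous_const.mul Real.continuous_sin)).measurable)).aestronglyMeasurable

lemma integrableOn_log_Ioc01 : IntegrableOn Real.log (Ioc (0:ℝ) 1) := by
  have hcont : ContinuousOn (fun x : ℝ => x - x * Real.log x) (Icc 0 1) :=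
    (continuous_id.sub Real.continuous_mul_log).continuousOn
  have hderiv : ∀ x ∈ Ioo (0:ℝ) 1,
      HasDerivAt (fun x : ℝ => x - x * Real.log x) (-Real.log x) x := by
    intro x hx
    have h := (hasDerivAt_id x).sub (Real.hasDerivAt_mul_log hx.1.ne')
    refine (h : HasDerivAt (fun x : ℝ => x - x * Real.log x) (1 - (Real.log x + 1)) x).congr_deriv ?_
    ring
  have hpos : ∀ x ∈ Ioo (0:ℝ) 1, 0 ≤ -Real.log x := fun x hx =>
    neg_nonneg.2 (Real.log_nonpos hx.1.le hx.2.le)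
  have h := intervalIntegral.integrableOn_deriv_of_nonneg hcont hderiv hpos
  have he : Real.log = fun x : ℝ => -(-Real.log x) := by funext x; ring
  rw [he]
  exact h.neg

lemma one_le_half_pi : (1:ℝ) ≤ π / 2 := by
  have := Real.pi_gt_three
  linarith

lemma integrableOn_abs_log : IntegrableOn (fun t : ℝ => |Real.log t|) (Ioc 0 (π/2)) := by
  have h1 : IntegrableOn (fun t : ℝ => |Real.log t|) (Ioc 0 1) :=
    integrableOn_log_Ioc01.abs
  have h2 : IntegrableOn (fun t : ℝ => |Real.log t|) (Ioc 1 (π/2)) := by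
    have hc : ContinuousOn (fun t : ℝ => |Real.log t|) (Icc 1 (π/2)) := by
      apply ContinuousOn.abs
      apply Real.continuousOn_log.mono
      intro x hx
      simp only [mem_compl_iff, mem_singleton_iff]
      exact ne_of_gt (lt_of_lt_of_le one_pos hx.1)
    exact (hc.integrableOn_Icc).mono_set Ioc_subset_Icc_self
  have := h1.union h2
  rwa [Ioc_union_Ioc_eq_Ioc zero_le_one one_le_half_pi] at this

lemma f_bound {t : ℝ} (ht : t ∈ Ioc (0:ℝ) (π/2)) :
    |f t| ≤ |Real.log t| + (Real.log 2 + Real.log (π/2)) := by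
  have hππ : (0:ℝ) < π := Real.pi_pos
  have hsinpos : 0 < Real.sin t :=
    Real.sin_pos_of_pos_of_lt_pi ht.1 (lt_of_le_of_lt ht.2 (by linarith))
  have hupper : Real.sin t ≤ t := Real.sin_le ht.1.le
  have hlower : 2 / π * t ≤ Real.sin t := Real.mul_le_sin ht.1.le ht.2
  have habs : |2 * Real.sin t| = 2 * Real.sin t := abs_of_pos (by linarith)
  have hf : f t = Real.log 2 + Real.log (Real.sin t) := by
    rw [f, habs, Real.log_mul (by norm_num) hsinpos.ne']
  have hlog_up : Real.log (Real.sin t) ≤ Real.log t :=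
    Real.log_le_log hsinpos hupper
  have hlow2 : Real.log (2/π) + Real.log t ≤ Real.log (Real.sin t) := by
    have : Real.log (2/π * t) ≤ Real.log (Real.sin t) :=
      Real.log_le_log (mul_pos (div_pos two_pos hππ) ht.1) hlower
    rwa [Real.log_mul (by positivity) ht.1.ne'] at this
  have hlogpi : Real.log (2/π) = -Real.log (π/2) := by
    rw [show (2:ℝ)/π = (π/2)⁻¹ by field_simp, Real.log_inv]
  have hlogpi2 : 0 ≤ Real.log (π/2) := Real.log_nonneg one_le_half_pi
  have hlog2 : 0 ≤ Real.log 2 := Real.log_nonneg one_le_two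
  rw [hlogpi] at hlow2
  rw [hf, abs_le]
  refine ⟨by linarith [neg_abs_le (Real.log t)], by linarith [le_abs_self (Real.log t)]⟩

lemma integrableOn_f : IntegrableOn f (Ioc 0 (π/2)) := by
  apply Integrable.mono' (integrableOn_abs_log.add (integrableOn_const (C := Real.log 2 + Real.log (π/2)) (by
    simp [Real.pi_pos])))
    (f_aesm _)
  rw [ae_restrict_iff' measurableSet_Ioc]
  filter_upwards with t ht
  simpa [Real.norm_eq_abs] using f_bound ht

lemma intervalIntegrable_f_half : IntervalIntegrable f volume 0 (π/2) := by
  rw [intervalIntegrable_iff_integrableOn_Ioc_of_le (by positivity)]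
  exact integrableOn_f

lemma intervalIntegrable_f_pi : IntervalIntegrable f volume 0 π := by
  have h2 : IntervalIntegrable f volume (π/2) π := by
    have h := intervalIntegrable_f_half.comp_sub_left π
    have he : (fun x : ℝ => f (π - x)) = f := funext f_reflect
    rw [he] at h
    have : π - 0 = π := by ring
    rw [this, show π - π/2 = π/2 by ring] at h
    exact h.symm
  exact intervalIntegrable_f_half.trans h2

lemma intervalIntegrable_f_nat : ∀ n : ℕ, IntervalIntegrable f volume 0 (n * π) := by
  intro n
  induction n with
  | zero => simp
  | succ n ih =>
      have hstep : IntervalIntegrable f volume (n * π) ((n+1) * π) := by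
        have h := intervalIntegrable_f_pi.comp_sub_right ((n:ℝ) * π)
        have he : (fun x : ℝ => f (x - n * π)) = f :=
          funext fun x => f_periodic.sub_nat_mul_eq n
        rw [he] at h
        simpa [add_mul, zero_add, add_comm] using h
      push_cast
      exact ih.trans hstep

lemma intervalIntegrable_f : ∀ a b : ℝ, IntervalIntegrable f volume a b := by
  intro a b
  obtain ⟨n, hn⟩ := exists_nat_gt (max |a| |b|)
  have hnπ : max |a| |b| ≤ n * π := by
    have h1 : (0:ℝ) ≤ max |a| |b| := le_max_of_le_left (abs_nonneg a)
    nlinarith [Real.pi_gt_three]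
  have hpos : IntervalIntegrable f volume 0 (n * π) := intervalIntegrable_f_nat n
  have he : (fun x : ℝ => f (-x)) = f := funext f_even
  have hneg : IntervalIntegrable f volume 0 (-(n * π)) := by
    have h := (IntervalIntegrable.iff_comp_neg (f := f)).mp hpos
    rw [he] at h
    simpa using h
  have hall : IntervalIntegrable f volume (-(n * π)) (n * π) := hneg.symm.trans hpos
  apply hall.mono_set
  rw [uIcc_of_le (by nlinarith [Real.pi_gt_three] : -((n:ℝ) * π) ≤ n * π)]
  intro x hx
  rw [mem_Icc]
  have h1 := le_trans (le_max_left |a| |b|) hnπ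
  have h2 := le_trans (le_max_right |a| |b|) hnπ
  rcases mem_uIcc.1 hx with h | h
  · constructor <;> linarith [neg_abs_le a, le_abs_self b, h.1, h.2]
  · constructor <;> linarith [neg_abs_le b, le_abs_self a, h.1, h.2]

/-- The key computation : `∫₀^π log|2 sin t| dt = 0`. -/
lemma integral_f_pi : ∫ t in (0:ℝ)..π, f t = 0 := by
  set I : ℝ := ∫ t in (0:ℝ)..π, f t with hI
  -- half integral equals I/2 by reflection symmetry
  have hhalf : ∫ t in (0:ℝ)..(π/2), f t = I / 2 := by
    have hsplit : (∫ t in (0:ℝ)..(π/2), f t) + ∫ t in (π/2)..π, f t = I :=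
      integral_add_adjacent_intervals (intervalIntegrable_f 0 (π/2))
        (intervalIntegrable_f (π/2) π)
    have hrefl : ∫ t in (π/2)..π, f t = ∫ t in (0:ℝ)..(π/2), f t := by
      have h := intervalIntegral.integral_comp_sub_left (a := 0) (b := π/2) f π
      rw [show π - π/2 = π/2 by ring, sub_zero] at h
      have he : (fun x : ℝ => f (π - x)) = f := funext f_reflect
      rw [he] at h
      rw [← h, intervalIntegral.integral_symm]
    linarith [hsplit, hrefl]
  -- cosine half integral equals the sine one
  have hg : ∫ t in (0:ℝ)..(π/2), Real.log |2 * Real.cos t| = I / 2 := by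
    have h := intervalIntegral.integral_comp_sub_left (a := 0) (b := π/2) f (π/2)
    rw [show π/2 - π/2 = 0 by ring, sub_zero] at h
    have he : (fun x : ℝ => f (π/2 - x)) = fun x => Real.log |2 * Real.cos x| := by
      funext x
      simp [f, Real.sin_pi_div_two_sub]
    rw [he] at h
    rw [h]; exact hhalf
  -- double angle substitution
  have hdouble : ∫ t in (0:ℝ)..(π/2), f (2 * t) = I / 2 := by
    have h := intervalIntegral.integral_comp_mul_left (a := 0) (b := π/2) f two_ne_zero
    rw [mul_zero, show (2:ℝ) * (π/2) = π by ring] at h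
    rw [h, smul_eq_mul, ← hI]
    ring
  -- identity f(2t) = f(t) + log|2 cos t| a.e.
  have hsum : ∫ t in (0:ℝ)..(π/2), f (2*t)
      = (∫ t in (0:ℝ)..(π/2), f t) + ∫ t in (0:ℝ)..(π/2), Real.log |2 * Real.cos t| := by
    have hgi : IntervalIntegrable (fun t => Real.log |2 * Real.cos t|) volume 0 (π/2) := by
      have h := (intervalIntegrable_f 0 (π/2)).comp_sub_left (π/2)
      rw [show π/2 - 0 = π/2 by ring, show π/2 - π/2 = 0 by ring] at h
      have he : (fun x : ℝ => f (π/2 - x)) = fun x => Real.log |2 * Real.cos x| := by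
        funext x
        simp [f, Real.sin_pi_div_two_sub]
      rw [he] at h
      exact h.symm
    rw [← intervalIntegral.integral_add (intervalIntegrable_f 0 (π/2)) hgi]
    apply intervalIntegral.integral_congr_ae
    have hz : (volume : Measure ℝ) {t : ℝ | Real.sin t = 0 ∨ Real.cos t = 0} = 0 := by
      have hz2 : (volume : Measure ℝ)
          (⋃ k : ℤ, ({(k:ℝ) * π, (2*(k:ℝ)+1) * π/2} : Set ℝ)) = 0 := by
        apply measure_iUnion_null
        intro k
        exact (Set.finite_singleton _).insert _ |>.measure_zero _
      refine measure_mono_null ?_ hz2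
      intro x hx
      simp only [mem_setOf_eq] at hx
      rcases hx with h | h
      · obtain ⟨k, hk⟩ := Real.sin_eq_zero_iff.1 h
        exact mem_iUnion.2 ⟨k, by simp [← hk]⟩
      · obtain ⟨k, hk⟩ := Real.cos_eq_zero_iff.1 h
        exact mem_iUnion.2 ⟨k, by simp [hk]⟩
    filter_upwards [MeasureTheory.compl_mem_ae_iff.mpr hz] with t ht _
    simp only [mem_compl_iff, mem_setOf_eq, not_or] at ht
    obtain ⟨hs, hc⟩ := ht
    show f (2 * t) = f t + Real.log |2 * Real.cos t|
    rw [f, f, Real.sin_two_mul,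
      show |2 * (2 * Real.sin t * Real.cos t)| = |2 * Real.sin t| * |2 * Real.cos t| by
        rw [← abs_mul]; ring_nf,
      Real.log_mul (by simpa [abs_eq_zero] using hs) (by simpa [abs_eq_zero] using hc)]
  rw [hdouble, hhalf, hg] at hsum
  linarith

theorem main :
    Continuous lob ∧ (∀ x : ℝ, lob (-x) = -lob x) ∧
      (∀ x : ℝ, lob (x + π) = lob x) := by
  have hlob : lob = fun x => -∫ t in (0:ℝ)..x, f t := rfl
  refine ⟨?_, ?_, ?_⟩
  · rw [hlob]
    exact (intervalIntegral.continuous_primitive intervalIntegrable_f 0).neg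
  · intro x
    rw [hlob]
    simp only [neg_neg]
    have h := intervalIntegral.integral_comp_neg (a := (0:ℝ)) (b := x) f
    have he : (fun t : ℝ => f (-t)) = f := funext f_even
    rw [he, neg_zero] at h
    rw [intervalIntegral.integral_symm (-x) 0, ← h, neg_neg]
  · intro x
    rw [hlob]
    simp only [neg_inj]
    have hsplit : (∫ t in (0:ℝ)..x, f t) + ∫ t in x..(x+π), f t
        = ∫ t in (0:ℝ)..(x+π), f t :=
      integral_add_adjacent_intervals (intervalIntegrable_f 0 x)
        (intervalIntegrable_f x (x+π))
    have hper : ∫ t in x..(x+π), f t = ∫ t in (0:ℝ)..π, f t := by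
      have := f_periodic.intervalIntegral_add_eq x 0
      simpa using this
    rw [← hsplit, hper, integral_f_pi, add_zero]

end LobAux

theorem lob_continuous_odd_periodic :
    Continuous lob ∧ (∀ x : ℝ, lob (-x) = -lob x) ∧
      (∀ x : ℝ, lob (x + π) = lob x) := by
  exact LobAux.main
end

section
/- For all real α, β with 0 < α, 0 < β and α + β < π, the determinant of the 2×2 matrix [[−cot α + cot(α+β), cot(α+β)], [cot(α+β), −cot β + cot(α+β)]] equals 1; moreover this matrix is negative definite. -/
open Real

theorem hessian_det_one_negDef (α β : ℝ) (hα : 0 < α) (hβ : 0 < β)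
    (hαβ : α + β < π) :
    (!![-Real.cot α + Real.cot (α + β), Real.cot (α + β);
        Real.cot (α + β), -Real.cot β + Real.cot (α + β)] :
      Matrix (Fin 2) (Fin 2) ℝ).det = 1 ∧
    (-(!![-Real.cot α + Real.cot (α + β), Real.cot (α + β);
          Real.cot (α + β), -Real.cot β + Real.cot (α + β)] :
        Matrix (Fin 2) (Fin 2) ℝ)).PosDef := by
  have hsα : 0 < Real.sin α := Real.sin_pos_of_pos_of_lt_pi hα (by linarith)
  have hsβ : 0 < Real.sin β := Real.sin_pos_of_pos_of_lt_pi hβ (by linarith)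
  have hsαβ : 0 < Real.sin (α + β) := Real.sin_pos_of_pos_of_lt_pi (by linarith) hαβ
  have ha : Real.cot α = Real.cos α / Real.sin α := Real.cot_eq_cos_div_sin α
  have hb : Real.cot β = Real.cos β / Real.sin β := Real.cot_eq_cos_div_sin β
  have hc : Real.cot (α + β) = Real.cos (α + β) / Real.sin (α + β) :=
    Real.cot_eq_cos_div_sin (α + β)
  set a := Real.cot α
  set b := Real.cot β
  set c := Real.cot (α + β)
  have hkey : a * b - c * (a + b) = 1 := by
    have h1 := hsα.ne'
    have h2 := hsβ.ne'
    have h3 := hsαβ.ne'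
    rw [ha, hb, hc]
    field_simp
    rw [Real.sin_add, Real.cos_add]
    nlinarith [Real.sin_sq_add_cos_sq α, Real.sin_sq_add_cos_sq β]
  have hac : c < a := by
    have h : a - c = Real.sin β / (Real.sin α * Real.sin (α + β)) := by
      rw [ha, hc]
      field_simp
      rw [Real.sin_add, Real.cos_add]
      nlinarith [Real.sin_sq_add_cos_sq α]
    nlinarith [div_pos hsβ (mul_pos hsα hsαβ)]
  have hbc : c < b := by
    have h : b - c = Real.sin α / (Real.sin β * Real.sin (α + β)) := by
      rw [hb, hc]
      field_simp
      rw [Real.sin_add, Real.cos_add]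
      nlinarith [Real.sin_sq_add_cos_sq β]
    nlinarith [div_pos hsα (mul_pos hsβ hsαβ)]
  have hdet : (-a + c) * (-b + c) - c * c = 1 := by nlinarith [hkey]
  constructor
  · rw [Matrix.det_fin_two_of]
    linarith [hdet]
  · refine Matrix.posDef_iff_dotProduct_mulVec.mpr ⟨Matrix.IsHermitian.neg ?_, ?_⟩
    · ext i j
      fin_cases i <;> fin_cases j <;> simp [Matrix.conjTranspose_apply]
    · intro x hx
      have h01 : x 0 ≠ 0 ∨ x 1 ≠ 0 := by
        by_contra h
        push_neg at h
        exact hx (funext fun i => by fin_cases i <;> simp [h.1, h.2])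
      have hexp : dotProduct (star x)
          ((-(!![-a + c, c; c, -b + c] : Matrix (Fin 2) (Fin 2) ℝ)).mulVec x) =
          (a - c) * (x 0) ^ 2 - 2 * c * (x 0) * (x 1) + (b - c) * (x 1) ^ 2 := by
        simp [dotProduct, Matrix.mulVec, Fin.sum_univ_two]
        ring
      rw [hexp]
      rcases eq_or_ne (x 1) 0 with h1 | h1
      · have h0 : x 0 ≠ 0 := by
          rcases h01 with h | h
          · exact h
          · exact absurd h1 h
        rw [h1]
        have := mul_pos (sub_pos.mpr hac) (sq_pos_of_ne_zero h0)
        nlinarith [this]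
      · nlinarith [sq_nonneg ((a - c) * x 0 - c * x 1), sq_pos_of_ne_zero h1,
          sub_pos.mpr hac, hdet]
end

section
/- The function V₀(γ₁,γ₂,γ₃) = Л(γ₁) + Л(γ₂) + Л(γ₃) is strictly concave on the convex set Δ₀: for all p ≠ q in Δ₀ and all t with 0 < t < 1, V₀(t·p + (1−t)·q) > t·V₀(p) + (1−t)·V₀(q). -/
open Real

open MeasureTheory intervalIntegral

-- Step 1: log is interval integrable on [0,1]
lemma intervalIntegrable_neg_log_01 :
    IntervalIntegrable (fun t : ℝ => -Real.log t) volume 0 1 := by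
  apply intervalIntegrable_deriv_of_nonneg (g := fun t : ℝ => t - t * Real.log t)
  · exact (continuous_id.sub Real.continuous_mul_log).continuousOn
  · intro x hx
    simp only [min_eq_left zero_le_one, max_eq_right zero_le_one] at hx
    have h1 : HasDerivAt (fun t : ℝ => t * Real.log t) (Real.log x + 1) x := by
      have := (hasDerivAt_id x).mul (Real.hasDerivAt_log hx.1.ne')
      refine this.congr_deriv ?_
      simp [mul_inv_cancel₀ hx.1.ne']
    have := (hasDerivAt_id x).sub h1
    refine this.congr_deriv ?_
    ring
  · intro x hx
    simp only [min_eq_left zero_le_one, max_eq_right zero_le_one] at hx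
    simp only [Left.nonneg_neg_iff]
    exact Real.log_nonpos hx.1.le hx.2.le

lemma intervalIntegrable_log_two_sin {x : ℝ} (hx0 : 0 < x) (hxpi : x < π) :
    IntervalIntegrable (fun t : ℝ => Real.log |2 * Real.sin t|) volume 0 x := by
  have hmeas : Measurable fun t : ℝ => Real.log |2 * Real.sin t| :=
    Real.measurable_log.comp ((continuous_const.mul Real.continuous_sin).abs.measurable)
  set m : ℝ := min x 1 with hm
  have hm0 : 0 < m := lt_min hx0 one_pos
  have hm1 : m ≤ 1 := min_le_right _ _
  have hmx : m ≤ x := min_le_left _ _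
  have hA : IntervalIntegrable (fun t : ℝ => Real.log |2 * Real.sin t|) volume 0 m := by
    have hdom : IntervalIntegrable (fun t : ℝ => Real.log 2 + -Real.log t) volume 0 m :=
      intervalIntegrable_const.add (intervalIntegrable_neg_log_01.mono_set
        (Set.uIcc_subset_uIcc Set.left_mem_uIcc
          (by rw [Set.uIcc_of_le zero_le_one]; exact ⟨hm0.le, hm1⟩)))
    apply hdom.mono_fun (hmeas.aestronglyMeasurable)
    filter_upwards [ae_restrict_mem measurableSet_uIoc] with t ht
    rw [Set.uIoc_of_le hm0.le] at ht
    obtain ⟨ht0, htm⟩ := ht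
    have ht1 : t ≤ 1 := htm.trans hm1
    have hsin : t / 2 < Real.sin t := by
      have h := Real.sin_gt_sub_cube ht0
      have h3 : t ^ 3 ≤ t := by nlinarith [sq_nonneg t, sq_nonneg (t-1), sq_nonneg (t+1)]
      linarith
    have h2s : t < 2 * Real.sin t := by linarith
    have h2s2 : 2 * Real.sin t ≤ 2 := by nlinarith [Real.sin_le_one t]
    have habs : |2 * Real.sin t| = 2 * Real.sin t := abs_of_pos (by linarith)
    have hlogt : Real.log t ≤ 0 := Real.log_nonpos ht0.le ht1
    have hub : Real.log |2 * Real.sin t| ≤ Real.log 2 := by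
      rw [habs]
      exact Real.log_le_log (by linarith) h2s2 |>.trans_eq (by norm_num) |>.trans (le_refl _)
    have hlb : Real.log t ≤ Real.log |2 * Real.sin t| := by
      rw [habs]
      exact Real.log_le_log ht0 h2s.le
    rw [Real.norm_eq_abs, Real.norm_eq_abs]
    have hfnn : 0 ≤ Real.log 2 + -Real.log t := by
      have := Real.log_nonneg (by norm_num : (1:ℝ) ≤ 2); linarith
    rw [abs_of_nonneg hfnn, abs_le]
    constructor
    · have := Real.log_nonneg (by norm_num : (1:ℝ) ≤ 2); linarith
    · linarith
  have hB : IntervalIntegrable (fun t : ℝ => Real.log |2 * Real.sin t|) volume m x := by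
    apply ContinuousOn.intervalIntegrable
    apply ContinuousOn.log ((continuous_const.mul Real.continuous_sin).abs.continuousOn)
    intro t ht
    rw [Set.uIcc_of_le hmx] at ht
    have hs : 0 < Real.sin t := Real.sin_pos_of_pos_of_lt_pi (lt_of_lt_of_le hm0 ht.1)
      (lt_of_le_of_lt ht.2 hxpi)
    exact abs_ne_zero.mpr (mul_pos two_pos hs).ne'
  exact hA.trans hB


lemma lob_hasDerivAt {x : ℝ} (hx0 : 0 < x) (hxpi : x < π) :
    HasDerivAt lob (-(Real.log 2 + Real.log (Real.sin x))) x := by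
  have hs : 0 < Real.sin x := Real.sin_pos_of_pos_of_lt_pi hx0 hxpi
  have habs : |2 * Real.sin x| = 2 * Real.sin x := abs_of_pos (by linarith)
  have hmeas : StronglyMeasurableAtFilter (fun t : ℝ => Real.log |2 * Real.sin t|)
      (nhds x) volume :=
    ⟨Set.univ, Filter.univ_mem,
      (Real.measurable_log.comp
        ((continuous_const.mul Real.continuous_sin).abs.measurable)).aestronglyMeasurable⟩
  have hcont : ContinuousAt (fun t : ℝ => Real.log |2 * Real.sin t|) x := by
    apply (Real.continuousAt_log (by rw [habs]; positivity)).comp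
    exact ((continuous_const.mul Real.continuous_sin).abs).continuousAt
  have h := intervalIntegral.integral_hasDerivAt_right
    (intervalIntegrable_log_two_sin hx0 hxpi) hmeas hcont
  have h2 := h.neg
  have : Real.log |2 * Real.sin x| = Real.log 2 + Real.log (Real.sin x) := by
    rw [habs, Real.log_mul two_ne_zero hs.ne']
  rw [this] at h2
  exact h2

lemma lob_hasDerivAt2 {x : ℝ} (hx0 : 0 < x) (hxpi : x < π) :
    HasDerivAt (fun y => -(Real.log 2 + Real.log (Real.sin y))) (-(Real.cos x / Real.sin x)) x := by
  have hs : 0 < Real.sin x := Real.sin_pos_of_pos_of_lt_pi hx0 hxpi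
  have h : HasDerivAt (fun y => Real.log (Real.sin y)) (Real.cos x / Real.sin x) x :=
    (Real.hasDerivAt_sin x).log hs.ne'
  have := ((hasDerivAt_const x (Real.log 2)).add h).neg
  exact this.congr_deriv (by ring)

lemma key_pos {a b c d0 d1 d2 : ℝ} (ha0 : 0 < a) (hapi : a < π) (hb0 : 0 < b) (hbpi : b < π)
    (hc0 : 0 < c) (hcpi : c < π) (hsum : a + b + c = π) (hdsum : d0 + d1 + d2 = 0)
    (hd : d0 ≠ 0 ∨ d1 ≠ 0 ∨ d2 ≠ 0) :
    0 < Real.cos a / Real.sin a * d0 ^ 2 + Real.cos b / Real.sin b * d1 ^ 2 +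
      Real.cos c / Real.sin c * d2 ^ 2 := by
  have hsa : 0 < Real.sin a := Real.sin_pos_of_pos_of_lt_pi ha0 hapi
  have hsb : 0 < Real.sin b := Real.sin_pos_of_pos_of_lt_pi hb0 hbpi
  have hsc : 0 < Real.sin c := Real.sin_pos_of_pos_of_lt_pi hc0 hcpi
  have hc' : c = π - (a + b) := by linarith
  have hsinc : Real.sin c = Real.sin a * Real.cos b + Real.cos a * Real.sin b := by
    rw [hc', Real.sin_pi_sub, Real.sin_add]
  have hcosc : Real.cos c = Real.sin a * Real.sin b - Real.cos a * Real.cos b := by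
    rw [hc', Real.cos_pi_sub, Real.cos_add]; ring
  have hd2 : d2 = -(d0 + d1) := by linarith
  have hQ : Real.cos a * Real.sin b * Real.sin c * d0 ^ 2 +
      Real.sin a * Real.cos b * Real.sin c * d1 ^ 2 +
      Real.sin a * Real.sin b * Real.cos c * d2 ^ 2 =
      (Real.cos a * Real.sin b * d0 - Real.sin a * Real.cos b * d1) ^ 2 +
      (Real.sin a * Real.sin b * (d0 + d1)) ^ 2 := by
    rw [hsinc, hcosc, hd2]; ring
  have hQpos : 0 < Real.cos a * Real.sin b * Real.sin c * d0 ^ 2 +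
      Real.sin a * Real.cos b * Real.sin c * d1 ^ 2 +
      Real.sin a * Real.sin b * Real.cos c * d2 ^ 2 := by
    rw [hQ]
    by_contra hcon
    push_neg at hcon
    have h1 : Real.sin a * Real.sin b * (d0 + d1) = 0 := by
      nlinarith [sq_nonneg (Real.cos a * Real.sin b * d0 - Real.sin a * Real.cos b * d1),
        sq_nonneg (Real.sin a * Real.sin b * (d0 + d1))]
    have h2 : Real.cos a * Real.sin b * d0 - Real.sin a * Real.cos b * d1 = 0 := by
      nlinarith [sq_nonneg (Real.cos a * Real.sin b * d0 - Real.sin a * Real.cos b * d1),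
        sq_nonneg (Real.sin a * Real.sin b * (d0 + d1))]
    have hd01 : d0 + d1 = 0 := by
      by_contra hcon
      exact (mul_ne_zero (mul_pos hsa hsb).ne' hcon) h1
    have h3 : d0 * Real.sin c = 0 := by
      rw [hsinc]
      linear_combination h2 + Real.sin a * Real.cos b * hd01
    have hd0 : d0 = 0 := by
      rcases mul_eq_zero.mp h3 with h | h
      · exact h
      · exact absurd h hsc.ne'
    have hd1 : d1 = 0 := by linarith
    have hd2' : d2 = 0 := by linarith
    rcases hd with h | h | h <;> [exact h hd0; exact h hd1; exact h hd2']
  have hT : (Real.cos a / Real.sin a * d0 ^ 2 + Real.cos b / Real.sin b * d1 ^ 2 +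
      Real.cos c / Real.sin c * d2 ^ 2) * (Real.sin a * (Real.sin b * Real.sin c)) =
      Real.cos a * Real.sin b * Real.sin c * d0 ^ 2 +
      Real.sin a * Real.cos b * Real.sin c * d1 ^ 2 +
      Real.sin a * Real.sin b * Real.cos c * d2 ^ 2 := by
    field_simp
  have hP : 0 < Real.sin a * (Real.sin b * Real.sin c) := by positivity
  rw [← hT] at hQpos
  exact (mul_pos_iff_of_pos_right hP).mp hQpos


/-- `V₀(γ₁,γ₂,γ₃) = Л(γ₁) + Л(γ₂) + Л(γ₃)`. -/
noncomputable def V0 (γ : Fin 3 → ℝ) : ℝ := lob (γ 0) + lob (γ 1) + lob (γ 2)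

/-- The set Δ₀ of angle triples of ideal tetrahedra. -/
def D0 : Set (Fin 3 → ℝ) :=
  {γ | (∀ i, 0 < γ i) ∧ γ 0 + γ 1 + γ 2 = π}

theorem V0_strictConcaveOn :
    ∀ p ∈ D0, ∀ q ∈ D0, p ≠ q → ∀ t : ℝ, 0 < t → t < 1 →
      t * V0 p + (1 - t) * V0 q < V0 (t • p + (1 - t) • q) := by
  intro p hp q hq hne t ht0 ht1
  obtain ⟨hppos, hpsum⟩ := hp
  obtain ⟨hqpos, hqsum⟩ := hq
  have hplt : ∀ i : Fin 3, p i < π := by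
    have h0 : p 0 < π := by linarith [hppos 1, hppos 2]
    have h1 : p 1 < π := by linarith [hppos 0, hppos 2]
    have h2 : p 2 < π := by linarith [hppos 0, hppos 1]
    intro i; fin_cases i
    · exact h0
    · exact h1
    · exact h2
  have hqlt : ∀ i : Fin 3, q i < π := by
    have h0 : q 0 < π := by linarith [hqpos 1, hqpos 2]
    have h1 : q 1 < π := by linarith [hqpos 0, hqpos 2]
    have h2 : q 2 < π := by linarith [hqpos 0, hqpos 1]
    intro i; fin_cases i
    · exact h0
    · exact h1
    · exact h2
  have hmem : ∀ s ∈ Set.Icc (0:ℝ) 1, ∀ i : Fin 3,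
      0 < q i + s * (p i - q i) ∧ q i + s * (p i - q i) < π := by
    intro s hs i
    constructor
    · nlinarith [mul_nonneg (by linarith [hs.2] : (0:ℝ) ≤ 1 - s)
          (sub_nonneg.2 (min_le_right (p i) (q i))),
        mul_nonneg hs.1 (sub_nonneg.2 (min_le_left (p i) (q i))),
        lt_min (hppos i) (hqpos i)]
    · nlinarith [mul_nonneg (by linarith [hs.2] : (0:ℝ) ≤ 1 - s)
          (sub_nonneg.2 (le_max_right (p i) (q i))),
        mul_nonneg hs.1 (sub_nonneg.2 (le_max_left (p i) (q i))),
        max_lt (hplt i) (hqlt i)]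
  have haff : ∀ (s : ℝ) (i : Fin 3),
      HasDerivAt (fun u : ℝ => q i + u * (p i - q i)) (p i - q i) s := by
    intro s i
    simpa using ((hasDerivAt_id s).mul_const (p i - q i)).const_add (q i)
  set f : ℝ → ℝ := fun s => lob (q 0 + s * (p 0 - q 0)) + lob (q 1 + s * (p 1 - q 1)) +
    lob (q 2 + s * (p 2 - q 2)) with hf
  set f1 : ℝ → ℝ := fun s =>
    -(Real.log 2 + Real.log (Real.sin (q 0 + s * (p 0 - q 0)))) * (p 0 - q 0) +
    -(Real.log 2 + Real.log (Real.sin (q 1 + s * (p 1 - q 1)))) * (p 1 - q 1) +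
    -(Real.log 2 + Real.log (Real.sin (q 2 + s * (p 2 - q 2)))) * (p 2 - q 2) with hf1
  have hg1 : ∀ s ∈ Set.Icc (0:ℝ) 1, HasDerivAt f (f1 s) s := by
    intro s hs
    have h0 := ((lob_hasDerivAt (hmem s hs 0).1 (hmem s hs 0).2).comp s (haff s 0))
    have h1 := ((lob_hasDerivAt (hmem s hs 1).1 (hmem s hs 1).2).comp s (haff s 1))
    have h2 := ((lob_hasDerivAt (hmem s hs 2).1 (hmem s hs 2).2).comp s (haff s 2))
    exact (h0.add h1).add h2
  have hg2 : ∀ s ∈ Set.Icc (0:ℝ) 1, HasDerivAt f1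
      (-(Real.cos (q 0 + s * (p 0 - q 0)) / Real.sin (q 0 + s * (p 0 - q 0))) * (p 0 - q 0) * (p 0 - q 0) +
       -(Real.cos (q 1 + s * (p 1 - q 1)) / Real.sin (q 1 + s * (p 1 - q 1))) * (p 1 - q 1) * (p 1 - q 1) +
       -(Real.cos (q 2 + s * (p 2 - q 2)) / Real.sin (q 2 + s * (p 2 - q 2))) * (p 2 - q 2) * (p 2 - q 2)) s := by
    intro s hs
    have h0 := ((lob_hasDerivAt2 (hmem s hs 0).1 (hmem s hs 0).2).comp s (haff s 0)).mul_const (p 0 - q 0)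
    have h1 := ((lob_hasDerivAt2 (hmem s hs 1).1 (hmem s hs 1).2).comp s (haff s 1)).mul_const (p 1 - q 1)
    have h2 := ((lob_hasDerivAt2 (hmem s hs 2).1 (hmem s hs 2).2).comp s (haff s 2)).mul_const (p 2 - q 2)
    exact (h0.add h1).add h2
  have hgcont : ContinuousOn f (Set.Icc 0 1) :=
    fun s hs => ((hg1 s hs).continuousAt).continuousWithinAt
  have hd : (p 0 - q 0) ≠ 0 ∨ (p 1 - q 1) ≠ 0 ∨ (p 2 - q 2) ≠ 0 := by
    obtain ⟨i, hi⟩ := Function.ne_iff.mp hne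
    fin_cases i
    · exact Or.inl (sub_ne_zero_of_ne hi)
    · exact Or.inr (Or.inl (sub_ne_zero_of_ne hi))
    · exact Or.inr (Or.inr (sub_ne_zero_of_ne hi))
  have h2nd : ∀ x ∈ interior (Set.Icc (0:ℝ) 1), deriv^[2] f x < 0 := by
    intro x hx
    rw [interior_Icc] at hx
    have hxIcc : x ∈ Set.Icc (0:ℝ) 1 := Set.Ioo_subset_Icc_self hx
    have hEvEq : deriv f =ᶠ[nhds x] f1 :=
      Filter.eventuallyEq_of_mem (isOpen_Ioo.mem_nhds hx)
        (fun s hs => (hg1 s (Set.Ioo_subset_Icc_self hs)).deriv)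
    show deriv (deriv f) x < 0
    rw [hEvEq.deriv_eq, (hg2 x hxIcc).deriv]
    have hkey := key_pos (hmem x hxIcc 0).1 (hmem x hxIcc 0).2 (hmem x hxIcc 1).1 (hmem x hxIcc 1).2
      (hmem x hxIcc 2).1 (hmem x hxIcc 2).2
      (by linear_combination (1 - x) * hqsum + x * hpsum :
        (q 0 + x * (p 0 - q 0)) + (q 1 + x * (p 1 - q 1)) + (q 2 + x * (p 2 - q 2)) = π)
      (by linear_combination hpsum - hqsum : (p 0 - q 0) + (p 1 - q 1) + (p 2 - q 2) = 0) hd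
    nlinarith [hkey]
  have hconc := strictConcaveOn_of_deriv2_neg (convex_Icc (0:ℝ) 1) hgcont h2nd
  have key := hconc.2 (Set.right_mem_Icc.mpr zero_le_one) (Set.left_mem_Icc.mpr zero_le_one)
    one_ne_zero ht0 (by linarith : 0 < 1 - t) (by ring : t + (1 - t) = 1)
  simp only [hf, smul_eq_mul, mul_one, mul_zero, add_zero, one_mul, zero_mul] at key
  have E1 : ∀ i : Fin 3, q i + (p i - q i) = p i := fun i => by ring
  rw [E1 0, E1 1, E1 2] at key
  have e : ∀ i : Fin 3, (t • p + (1 - t) • q) i = q i + t * (p i - q i) := by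
    intro i
    simp only [Pi.add_apply, Pi.smul_apply, smul_eq_mul]
    ring
  unfold V0
  rw [e 0, e 1, e 2]
  exact key
end

section
/- The function V is strictly concave on the convex set Δ: for all p ≠ q in Δ and all t with 0 < t < 1, V(t·p + (1−t)·q) > t·V(p) + (1−t)·V(q). -/
open Real

/-- The truncated volume `V(α₁₂,α₂₃,α₃₁,γ₁,γ₂,γ₃)` of a hyperbolic tetrahedron with
one ideal and three hyperideal vertices, given by the 15-term Lobachevsky formula. -/
noncomputable def V6 (a12 a23 a31 g1 g2 g3 : ℝ) : ℝ :=
  (lob g1 + lob g2 + lob g3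
    + lob ((π + a31 - a12 - g1) / 2) + lob ((π + a12 - a23 - g2) / 2)
    + lob ((π + a23 - a31 - g3) / 2)
    + lob ((π - a31 + a12 - g1) / 2) + lob ((π - a12 + a23 - g2) / 2)
    + lob ((π - a23 + a31 - g3) / 2)
    + lob ((π + a31 + a12 - g1) / 2) + lob ((π + a12 + a23 - g2) / 2)
    + lob ((π + a23 + a31 - g3) / 2)
    + lob ((π - a31 - a12 - g1) / 2) + lob ((π - a12 - a23 - g2) / 2)
    + lob ((π - a23 - a31 - g3) / 2)) / 2

/-- `V` as a function on ℝ⁶; coordinates `0,1,2,3,4,5` are `α₁₂,α₂₃,α₃₁,γ₁,γ₂,γ₃`. -/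
noncomputable def VV (p : Fin 6 → ℝ) : ℝ :=
  V6 (p 0) (p 1) (p 2) (p 3) (p 4) (p 5)

/-- The set Δ ⊂ ℝ⁶; coordinates `0,1,2,3,4,5` are `α₁₂,α₂₃,α₃₁,γ₁,γ₂,γ₃`. -/
def D6 : Set (Fin 6 → ℝ) :=
  {p | (∀ i, 0 < p i) ∧ p 3 + p 4 + p 5 = π ∧
    p 3 + p 0 + p 2 < π ∧ p 4 + p 1 + p 0 < π ∧ p 5 + p 2 + p 1 < π}

open MeasureTheory intervalIntegral


lemma intLog2Sin {y : ℝ} (h0 : 0 < y) (hπ : y < π) :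
    IntervalIntegrable (fun t => Real.log |2 * Real.sin t|) volume 0 y := by
  rw [intervalIntegrable_iff_integrableOn_Ioc_of_le h0.le]
  have hsy : 0 < Real.sin y := Real.sin_pos_of_pos_of_lt_pi h0 hπ
  have hc : 0 < Real.sin y / y := div_pos hsy h0
  set c : ℝ := Real.sin y / y with hcdef
  have hg : IntegrableOn (fun t : ℝ => (|Real.log (2*c)| + |Real.log 2|) + 2 * t ^ (-(1/2) : ℝ))
      (Set.Ioc 0 y) volume := by
    apply Integrable.add
    · exact (integrableOn_const_iff).mpr (Or.inr measure_Ioc_lt_top)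
    · have h1 : IntervalIntegrable (fun t : ℝ => t ^ (-(1/2):ℝ)) volume 0 y :=
        intervalIntegral.intervalIntegrable_rpow' (by norm_num)
      have := (intervalIntegrable_iff_integrableOn_Ioc_of_le h0.le).mp h1
      exact this.const_mul 2
  apply Integrable.mono hg
  · exact (Real.measurable_log.comp ((Real.measurable_sin.const_mul 2).abs)).aestronglyMeasurable
  · rw [ae_restrict_iff' measurableSet_Ioc]
    refine Filter.Eventually.of_forall (fun t ht => ?_)
    obtain ⟨ht0, hty⟩ := ht
    have hst : 0 < Real.sin t := Real.sin_pos_of_pos_of_lt_pi ht0 (lt_of_le_of_lt hty hπ)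
    have habs : |2 * Real.sin t| = 2 * Real.sin t := abs_of_pos (by linarith)
    have hrp : (0:ℝ) < t ^ (-(1/2) : ℝ) := Real.rpow_pos_of_pos ht0 _
    -- lower bound for sin t : concavity
    have hsin_lb : c * t ≤ Real.sin t := by
      have hconc := strictConcaveOn_sin_Icc.concaveOn
      have hmem1 : y ∈ Set.Icc (0:ℝ) π := ⟨h0.le, hπ.le⟩
      have hmem2 : (0:ℝ) ∈ Set.Icc (0:ℝ) π := ⟨le_refl _, Real.pi_pos.le⟩
      have ha : 0 ≤ t / y := div_nonneg ht0.le h0.le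
      have hb : 0 ≤ 1 - t / y := by
        have : t / y ≤ 1 := (div_le_one h0).mpr hty
        linarith
      have hab : t / y + (1 - t / y) = 1 := by ring
      have := hconc.2 hmem1 hmem2 ha hb hab
      simp only [smul_eq_mul, mul_zero, add_zero, Real.sin_zero] at this
      have he : t / y * y = t := div_mul_cancel₀ t h0.ne'
      rw [he] at this
      calc c * t = t / y * Real.sin y := by rw [hcdef]; field_simp
        _ ≤ Real.sin t := this
    -- upper bound
    have hub : Real.log (2 * Real.sin t) ≤ |Real.log 2| := by
      have h1 : Real.log (2 * Real.sin t) ≤ Real.log 2 := by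
        apply Real.log_le_log (by linarith)
        have := Real.sin_le_one t; linarith
      exact h1.trans (le_abs_self _)
    -- lower bound
    have hlb : -( |Real.log (2*c)| + 2 * t ^ (-(1/2):ℝ)) ≤ Real.log (2 * Real.sin t) := by
      have h1 : Real.log (2 * (c * t)) ≤ Real.log (2 * Real.sin t) := by
        apply Real.log_le_log (by positivity)
        nlinarith
      have h2 : Real.log (2 * (c * t)) = Real.log (2*c) + Real.log t := by
        rw [show 2 * (c*t) = (2*c)*t by ring]
        exact Real.log_mul (by positivity) ht0.ne'
      have h3 : -(2 * t ^ (-(1/2):ℝ)) ≤ Real.log t := by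
        have h4 := Real.log_le_sub_one_of_pos hrp
        have h5 : Real.log (t ^ (-(1/2):ℝ)) = (-(1/2)) * Real.log t := Real.log_rpow ht0 _
        rw [h5] at h4
        nlinarith
      have h6 : -|Real.log (2*c)| ≤ Real.log (2*c) := neg_abs_le _
      linarith
    rw [Real.norm_eq_abs, Real.norm_eq_abs, habs]
    have hrhs : |(|Real.log (2*c)| + |Real.log 2|) + 2 * t ^ (-(1/2):ℝ)|
        = (|Real.log (2*c)| + |Real.log 2|) + 2 * t ^ (-(1/2):ℝ) := by
      apply abs_of_nonneg; positivity
    rw [hrhs]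
    rw [abs_le]
    constructor
    · linarith [abs_nonneg (Real.log 2)]
    · linarith [abs_nonneg (Real.log (2*c)), hrp.le]

lemma hasDerivAt_lob {y : ℝ} (h0 : 0 < y) (hπ : y < π) :
    HasDerivAt lob (-Real.log (2 * Real.sin y)) y := by
  have hsy : 0 < Real.sin y := Real.sin_pos_of_pos_of_lt_pi h0 hπ
  have hint := intLog2Sin h0 hπ
  have hms : StronglyMeasurableAtFilter (fun t => Real.log |2 * Real.sin t|) (nhds y) :=
    (Real.measurable_log.comp
      ((Real.measurable_sin.const_mul 2).abs)).stronglyMeasurable.stronglyMeasurableAtFilter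
  have hcont : ContinuousAt (fun t => Real.log |2 * Real.sin t|) y := by
    have h1 : Continuous fun t : ℝ => |2 * Real.sin t| := (continuous_const.mul Real.continuous_sin).abs
    have h2 : |2 * Real.sin y| ≠ 0 := by
      rw [abs_ne_zero]; positivity
    exact h1.continuousAt.log h2
  have H := (intervalIntegral.integral_hasDerivAt_right hint hms hcont).neg
  have he : |2 * Real.sin y| = 2 * Real.sin y := abs_of_pos (by positivity)
  rw [he] at H
  exact H

lemma hasDerivAt_L {y : ℝ} (h0 : 0 < y) (hπ : y < π) :
    HasDerivAt (fun u => -Real.log (2 * Real.sin u)) (-(Real.cos y / Real.sin y)) y := by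
  have hsy : 0 < Real.sin y := Real.sin_pos_of_pos_of_lt_pi h0 hπ
  have h : HasDerivAt (fun u => -Real.log (2 * Real.sin u)) _ y := (((Real.hasDerivAt_sin y).const_mul 2).log (by positivity)).neg
  convert h using 1
  field_simp

lemma lobTerm {θ : ℝ → ℝ} {a s : ℝ} (hθ : HasDerivAt θ a s) (h0 : 0 < θ s) (h1 : θ s < π) :
    HasDerivAt (fun u => lob (θ u)) (-Real.log (2 * Real.sin (θ s)) * a) s :=
  (hasDerivAt_lob h0 h1).comp s hθ

lemma logTerm {θ : ℝ → ℝ} {a s : ℝ} (hθ : HasDerivAt θ a s) (h0 : 0 < θ s) (h1 : θ s < π) :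
    HasDerivAt (fun u => -Real.log (2 * Real.sin (θ u)) * a)
      (-(Real.cos (θ s) / Real.sin (θ s)) * a * a) s :=
  ((hasDerivAt_L h0 h1).comp s hθ).mul_const a



lemma triple_nonneg {x y z u v w : ℝ} (hx0 : 0 < x) (hx1 : x < π) (hy0 : 0 < y) (hy1 : y < π)
    (hz0 : 0 < z) (hz1 : z < π) (hsum : x + y + z = π) (hc : u + v + w = 0) :
    0 ≤ u^2 * (Real.cos x / Real.sin x) + v^2 * (Real.cos y / Real.sin y)
      + w^2 * (Real.cos z / Real.sin z) := by
  have sx := Real.sin_pos_of_pos_of_lt_pi hx0 hx1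
  have sy := Real.sin_pos_of_pos_of_lt_pi hy0 hy1
  have sz := Real.sin_pos_of_pos_of_lt_pi hz0 hz1
  have hu : u = -v - w := by linarith
  subst hu
  have hzs : Real.sin z = Real.sin (x + y) := by
    rw [show z = π - (x + y) by linarith, Real.sin_pi_sub]
  have hzc : Real.cos z = -Real.cos (x + y) := by
    rw [show z = π - (x + y) by linarith, Real.cos_pi_sub]
  have key : ((-v - w)^2 * (Real.cos x / Real.sin x) + v^2 * (Real.cos y / Real.sin y)
      + w^2 * (Real.cos z / Real.sin z)) * (Real.sin x * Real.sin y * Real.sin z)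
      = (v * Real.sin z + w * Real.cos x * Real.sin y)^2 + (w * Real.sin x * Real.sin y)^2 := by
    rw [hzs, hzc, Real.sin_add, Real.cos_add]
    have hsx := sx.ne'
    have hsy := sy.ne'
    have hsxy : Real.sin x * Real.cos y + Real.cos x * Real.sin y ≠ 0 := by
      rw [← Real.sin_add, ← hzs]; exact sz.ne'
    field_simp
    ring
  nlinarith [key, sq_nonneg (v * Real.sin z + w * Real.cos x * Real.sin y),
    sq_nonneg (w * Real.sin x * Real.sin y), mul_pos (mul_pos sx sy) sz]

lemma triple_pos {x y z u v w : ℝ} (hx0 : 0 < x) (hx1 : x < π) (hy0 : 0 < y) (hy1 : y < π)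
    (hz0 : 0 < z) (hz1 : z < π) (hsum : x + y + z = π) (hc : u + v + w = 0)
    (hnz : u ≠ 0 ∨ v ≠ 0 ∨ w ≠ 0) :
    0 < u^2 * (Real.cos x / Real.sin x) + v^2 * (Real.cos y / Real.sin y)
      + w^2 * (Real.cos z / Real.sin z) := by
  have sx := Real.sin_pos_of_pos_of_lt_pi hx0 hx1
  have sy := Real.sin_pos_of_pos_of_lt_pi hy0 hy1
  have sz := Real.sin_pos_of_pos_of_lt_pi hz0 hz1
  have hu : u = -v - w := by linarith
  subst hu
  have hzs : Real.sin z = Real.sin (x + y) := by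
    rw [show z = π - (x + y) by linarith, Real.sin_pi_sub]
  have hzc : Real.cos z = -Real.cos (x + y) := by
    rw [show z = π - (x + y) by linarith, Real.cos_pi_sub]
  have key : ((-v - w)^2 * (Real.cos x / Real.sin x) + v^2 * (Real.cos y / Real.sin y)
      + w^2 * (Real.cos z / Real.sin z)) * (Real.sin x * Real.sin y * Real.sin z)
      = (v * Real.sin z + w * Real.cos x * Real.sin y)^2 + (w * Real.sin x * Real.sin y)^2 := by
    rw [hzs, hzc, Real.sin_add, Real.cos_add]
    have hsx := sx.ne'
    have hsy := sy.ne'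
    have hsxy : Real.sin x * Real.cos y + Real.cos x * Real.sin y ≠ 0 := by
      rw [← Real.sin_add, ← hzs]; exact sz.ne'
    field_simp
    ring
  have hN : 0 < (v * Real.sin z + w * Real.cos x * Real.sin y)^2
      + (w * Real.sin x * Real.sin y)^2 := by
    by_cases hw : w = 0
    · have hv : v ≠ 0 := by
        rcases hnz with h | h | h
        · intro hv0; apply h; rw [hw, hv0]; ring
        · exact h
        · exact absurd hw h
      subst hw
      have : v * Real.sin z ≠ 0 := mul_ne_zero hv sz.ne'
      have h2 : 0 < (v * Real.sin z)^2 := by positivity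
      calc (0:ℝ) < (v * Real.sin z)^2 := h2
        _ ≤ _ := by nlinarith [sq_nonneg (0 * Real.sin x * Real.sin y)]
    · have : w * Real.sin x * Real.sin y ≠ 0 := mul_ne_zero (mul_ne_zero hw sx.ne') sy.ne'
      have h2 : 0 < (w * Real.sin x * Real.sin y)^2 := by positivity
      nlinarith [sq_nonneg (v * Real.sin z + w * Real.cos x * Real.sin y)]
  nlinarith [key, hN, mul_pos (mul_pos sx sy) sz]

set_option maxHeartbeats 4000000 in
lemma core (x0 x1 x2 x3 x4 x5 d0 d1 d2 d3 d4 d5 : ℝ)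
    (h0 : 0 < x0) (h1 : 0 < x1) (h2 : 0 < x2) (h3 : 0 < x3) (h4 : 0 < x4) (h5 : 0 < x5)
    (hs : x3 + x4 + x5 = π)
    (hc1 : x3 + x0 + x2 < π) (hc2 : x4 + x1 + x0 < π) (hc3 : x5 + x2 + x1 < π)
    (hd : d3 + d4 + d5 = 0)
    (hne : ¬(d0 = 0 ∧ d1 = 0 ∧ d2 = 0 ∧ d3 = 0 ∧ d4 = 0 ∧ d5 = 0)) :
    0 < d3^2 * (Real.cos x3 / Real.sin x3) + d4^2 * (Real.cos x4 / Real.sin x4) + d5^2 * (Real.cos x5 / Real.sin x5) + ((d2 - d0 - d3) / 2)^2 * (Real.cos ((π + x2 - x0 - x3) / 2) / Real.sin ((π + x2 - x0 - x3) / 2)) + ((d0 - d1 - d4) / 2)^2 * (Real.cos ((π + x0 - x1 - x4) / 2) / Real.sin ((π + x0 - x1 - x4) / 2)) + ((d1 - d2 - d5) / 2)^2 * (Real.cos ((π + x1 - x2 - x5) / 2) / Real.sin ((π + x1 - x2 - x5) / 2)) + ((-d2 + d0 - d3) / 2)^2 * (Real.cos ((π - x2 + x0 - x3) / 2) / Real.sin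 ((π - x2 + x0 - x3) / 2)) + ((-d0 + d1 - d4) / 2)^2 * (Real.cos ((π - x0 + x1 - x4) / 2) / Real.sin ((π - x0 + x1 - x4) / 2)) + ((-d1 + d2 - d5) / 2)^2 * (Real.cos ((π - x1 + x2 - x5) / 2) / Real.sin ((π - x1 + x2 - x5) / 2)) + ((d2 + d0 - d3) / 2)^2 * (Real.cos ((π + x2 + x0 - x3) / 2) / Real.sin ((π + x2 + x0 - x3) / 2)) + ((d0 + d1 - d4) / 2)^2 * (Real.cos ((π + x0 + x1 - x4) / 2) / Real.sin ((π + x0 + x1 - x4) / 2)) + ((d1 + d2 - d5) / 2)^2 * (Real.cos ((π + x1 + x2 - x5) / 2) / Real.sin ((π + x1 + x2 - x5) / 2)) + ((-d2 - d0 - d3) / 2)^2 * (Real.cos ((π - x2 - x0 - x3) / 2) / Real.sin ((π - x2 - x0 - x3) / 2)) + ((-d0 - d1 - d4) / 2)^2 * (Real.cos ((π - x0 - x1 - x4) / 2) / Real.sin ((π - x0 - x1 - x4) / 2)) + ((-d1 - d2 - d5) / 2)^2 * (Real.cos ((π - x1 - x2 - x5) / 2) / Real.sin ((π - x1 - x2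 - x5) / 2)) := by
  have hpi := Real.pi_pos
  have hlo1 : 0 < x3 := by linarith
  have hhi1 : x3 < π := by linarith
  have hlo2 : 0 < x4 := by linarith
  have hhi2 : x4 < π := by linarith
  have hlo3 : 0 < x5 := by linarith
  have hhi3 : x5 < π := by linarith
  have hlo4 : 0 < ((π + x2 - x0 - x3) / 2) := by linarith
  have hhi4 : ((π + x2 - x0 - x3) / 2) < π := by linarith
  have hlo5 : 0 < ((π + x0 - x1 - x4) / 2) := by linarith
  have hhi5 : ((π + x0 - x1 - x4) / 2) < π := by linarith
  have hlo6 : 0 < ((π + x1 - x2 - x5) / 2) := by linarith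
  have hhi6 : ((π + x1 - x2 - x5) / 2) < π := by linarith
  have hlo7 : 0 < ((π - x2 + x0 - x3) / 2) := by linarith
  have hhi7 : ((π - x2 + x0 - x3) / 2) < π := by linarith
  have hlo8 : 0 < ((π - x0 + x1 - x4) / 2) := by linarith
  have hhi8 : ((π - x0 + x1 - x4) / 2) < π := by linarith
  have hlo9 : 0 < ((π - x1 + x2 - x5) / 2) := by linarith
  have hhi9 : ((π - x1 + x2 - x5) / 2) < π := by linarith
  have hlo10 : 0 < ((π + x2 + x0 - x3) / 2) := by linarith
  have hhi10 : ((π + x2 + x0 - x3) / 2) < π := by linarith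
  have hlo11 : 0 < ((π + x0 + x1 - x4) / 2) := by linarith
  have hhi11 : ((π + x0 + x1 - x4) / 2) < π := by linarith
  have hlo12 : 0 < ((π + x1 + x2 - x5) / 2) := by linarith
  have hhi12 : ((π + x1 + x2 - x5) / 2) < π := by linarith
  have hlo13 : 0 < ((π - x2 - x0 - x3) / 2) := by linarith
  have hhi13 : ((π - x2 - x0 - x3) / 2) < π := by linarith
  have hlo14 : 0 < ((π - x0 - x1 - x4) / 2) := by linarith
  have hhi14 : ((π - x0 - x1 - x4) / 2) < π := by linarith
  have hlo15 : 0 < ((π - x1 - x2 - x5) / 2) := by linarith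
  have hhi15 : ((π - x1 - x2 - x5) / 2) < π := by linarith
  have hsumT0 : x3 + x4 + x5 = π := by linarith
  have hcoT0 : d3 + d4 + d5 = 0 := by linarith
  have hsumT1 : x3 + ((π + x2 - x0 - x3) / 2) + ((π - x2 + x0 - x3) / 2) = π := by linarith
  have hcoT1 : d3 + ((d2 - d0 - d3) / 2) + ((-d2 + d0 - d3) / 2) = 0 := by linarith
  have hsumT2 : x4 + ((π + x0 - x1 - x4) / 2) + ((π - x0 + x1 - x4) / 2) = π := by linarith
  have hcoT2 : d4 + ((d0 - d1 - d4) / 2) + ((-d0 + d1 - d4) / 2) = 0 := by linarith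
  have hsumT3 : x5 + ((π + x1 - x2 - x5) / 2) + ((π - x1 + x2 - x5) / 2) = π := by linarith
  have hcoT3 : d5 + ((d1 - d2 - d5) / 2) + ((-d1 + d2 - d5) / 2) = 0 := by linarith
  have hsumS1 : ((π + x2 + x0 - x3) / 2) + ((π - x0 - x1 - x4) / 2) + ((π + x1 - x2 - x5) / 2) = π := by linarith
  have hcoS1 : ((d2 + d0 - d3) / 2) + ((-d0 - d1 - d4) / 2) + ((d1 - d2 - d5) / 2) = 0 := by linarith
  have hsumS2 : ((π + x0 + x1 - x4) / 2) + ((π - x1 - x2 - x5) / 2) + ((π + x2 - x0 - x3) / 2) = π := by linarith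
  have hcoS2 : ((d0 + d1 - d4) / 2) + ((-d1 - d2 - d5) / 2) + ((d2 - d0 - d3) / 2) = 0 := by linarith
  have hsumS3 : ((π + x1 + x2 - x5) / 2) + ((π - x2 - x0 - x3) / 2) + ((π + x0 - x1 - x4) / 2) = π := by linarith
  have hcoS3 : ((d1 + d2 - d5) / 2) + ((-d2 - d0 - d3) / 2) + ((d0 - d1 - d4) / 2) = 0 := by linarith
  have hsumS1p : ((π + x2 + x0 - x3) / 2) + ((π - x1 - x2 - x5) / 2) + ((π - x0 + x1 - x4) / 2) = π := by linarith
  have hcoS1p : ((d2 + d0 - d3) / 2) + ((-d1 - d2 - d5) / 2) + ((-d0 + d1 - d4) / 2) = 0 := by linarith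
  have hsumS2p : ((π + x0 + x1 - x4) / 2) + ((π - x2 - x0 - x3) / 2) + ((π - x1 + x2 - x5) / 2) = π := by linarith
  have hcoS2p : ((d0 + d1 - d4) / 2) + ((-d2 - d0 - d3) / 2) + ((-d1 + d2 - d5) / 2) = 0 := by linarith
  have hsumS3p : ((π + x1 + x2 - x5) / 2) + ((π - x0 - x1 - x4) / 2) + ((π - x2 + x0 - x3) / 2) = π := by linarith
  have hcoS3p : ((d1 + d2 - d5) / 2) + ((-d0 - d1 - d4) / 2) + ((-d2 + d0 - d3) / 2) = 0 := by linarith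
  have hT0 := triple_nonneg hlo1 hhi1 hlo2 hhi2 hlo3 hhi3 hsumT0 hcoT0
  have hT1 := triple_nonneg hlo1 hhi1 hlo4 hhi4 hlo7 hhi7 hsumT1 hcoT1
  have hT2 := triple_nonneg hlo2 hhi2 hlo5 hhi5 hlo8 hhi8 hsumT2 hcoT2
  have hT3 := triple_nonneg hlo3 hhi3 hlo6 hhi6 hlo9 hhi9 hsumT3 hcoT3
  have hS1 := triple_nonneg hlo10 hhi10 hlo14 hhi14 hlo6 hhi6 hsumS1 hcoS1
  have hS2 := triple_nonneg hlo11 hhi11 hlo15 hhi15 hlo4 hhi4 hsumS2 hcoS2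
  have hS3 := triple_nonneg hlo12 hhi12 hlo13 hhi13 hlo5 hhi5 hsumS3 hcoS3
  have hS1p := triple_nonneg hlo10 hhi10 hlo15 hhi15 hlo8 hhi8 hsumS1p hcoS1p
  have hS2p := triple_nonneg hlo11 hhi11 hlo13 hhi13 hlo9 hhi9 hsumS2p hcoS2p
  have hS3p := triple_nonneg hlo12 hhi12 hlo14 hhi14 hlo7 hhi7 hsumS3p hcoS3p
  by_cases hg : d3 = 0 ∧ d4 = 0 ∧ d5 = 0
  · obtain ⟨e3, e4, e5⟩ := hg
    by_cases h02 : d0 = d2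
    · by_cases h01 : d0 = d1
      · have hd0 : d0 ≠ 0 := by
          intro h00; exact hne ⟨h00, by rw [← h01, h00], by rw [← h02, h00], e3, e4, e5⟩
        have hS1 := triple_pos hlo10 hhi10 hlo14 hhi14 hlo6 hhi6 hsumS1 hcoS1 (Or.inl (by intro hh; apply hd0; rw [e3] at hh; linarith))
        linarith
      · have hT2 := triple_pos hlo2 hhi2 hlo5 hhi5 hlo8 hhi8 hsumT2 hcoT2 (Or.inr (Or.inl (by intro hh; apply h01; rw [e4] at hh; linarith)))
        linarith
    · have hT1 := triple_pos hlo1 hhi1 hlo4 hhi4 hlo7 hhi7 hsumT1 hcoT1 (Or.inr (Or.inl (by intro hh; apply h02; rw [e3] at hh; linarith)))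
      linarith
  · have hnz : d3 ≠ 0 ∨ d4 ≠ 0 ∨ d5 ≠ 0 := by
      by_contra hcon
      push_neg at hcon
      exact hg ⟨hcon.1, hcon.2.1, hcon.2.2⟩
    have hT0 := triple_pos hlo1 hhi1 hlo2 hhi2 hlo3 hhi3 hsumT0 hcoT0 hnz
    linarith

noncomputable def Gfun (q0 q1 q2 q3 q4 q5 d0 d1 d2 d3 d4 d5 s : ℝ) : ℝ :=
  (-Real.log (2 * Real.sin (q3 + s*d3)) * d3 + -Real.log (2 * Real.sin (q4 + s*d4)) * d4 + -Real.log (2 * Real.sin (q5 + s*d5)) * d5 + -Real.log (2 * Real.sin ((π + (q2 + s*d2) - (q0 + s*d0) - (q3 + s*d3)) / 2)) * ((0 + d2 - d0 - d3) / 2) + -Real.log (2 * Real.sin ((π + (q0 + s*d0) - (q1 + s*d1) - (q4 + s*d4)) / 2)) * ((0 + d0 - d1 - d4) / 2) + -Real.log (2 * Real.sin ((π + (q1 + s*d1) - (q2 + s*d2) - (q5 + s*d5)) / 2)) * ((0 + d1 - d2 - d5) / 2) + -Real.log (2 * Real.sin ((π - (q2 + s*d2) + (q0 + s*d0) - (q3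 + s*d3)) / 2)) * ((0 - d2 + d0 - d3) / 2) + -Real.log (2 * Real.sin ((π - (q0 + s*d0) + (q1 + s*d1) - (q4 + s*d4)) / 2)) * ((0 - d0 + d1 - d4) / 2) + -Real.log (2 * Real.sin ((π - (q1 + s*d1) + (q2 + s*d2) - (q5 + s*d5)) / 2)) * ((0 - d1 + d2 - d5) / 2) + -Real.log (2 * Real.sin ((π + (q2 + s*d2) + (q0 + s*d0) - (q3 + s*d3)) / 2)) * ((0 + d2 + d0 - d3) / 2) + -Real.log (2 * Real.sin ((π + (q0 + s*d0) + (q1 + s*d1) - (q4 + s*d4)) / 2)) * ((0 + d0 + d1 - d4) / 2) + -Real.log (2 * Real.sin ((π + (q1 + s*d1) + (q2 + s*d2) - (q5 + s*d5)) / 2)) * ((0 + d1 + d2 - d5) / 2) + -Real.log (2 * Real.sin ((π - (q2 + s*d2) - (q0 + s*d0) - (q3 + s*d3)) / 2)) * ((0 - d2 - d0 - d3) / 2) + -Real.log (2 * Real.sin ((π - (q0 + s*d0) - (q1 + s*d1) - (q4 + s*d4)) / 2)) * ((0 - d0 - d1 - d4) / 2) + -Real.log (2 * Real.sin ((π - (q1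 + s*d1) - (q2 + s*d2) - (q5 + s*d5)) / 2)) * ((0 - d1 - d2 - d5) / 2)) / 2

noncomputable def Hfun (q0 q1 q2 q3 q4 q5 d0 d1 d2 d3 d4 d5 s : ℝ) : ℝ :=
  (-(Real.cos (q3 + s*d3) / Real.sin (q3 + s*d3)) * d3 * d3 + -(Real.cos (q4 + s*d4) / Real.sin (q4 + s*d4)) * d4 * d4 + -(Real.cos (q5 + s*d5) / Real.sin (q5 + s*d5)) * d5 * d5 + -(Real.cos ((π + (q2 + s*d2) - (q0 + s*d0) - (q3 + s*d3)) / 2) / Real.sin ((π + (q2 + s*d2) - (q0 + s*d0) - (q3 + s*d3)) / 2)) * ((0 + d2 - d0 - d3) / 2) * ((0 + d2 - d0 - d3) / 2) + -(Real.cos ((π + (q0 + s*d0) - (q1 + s*d1) - (q4 + s*d4)) / 2) / Real.sin ((π + (q0 + s*d0) - (q1 + s*d1) - (q4 + s*d4)) / 2)) * ((0 + d0 - d1 - d4) / 2) * ((0 + d0 - d1 - d4) / 2) + -(Real.cos ((π + (q1 + s*d1) - (q2 + s*d2) - (q5 + s*d5)) / 2) / Real.sin ((π + (q1 + s*d1)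 - (q2 + s*d2) - (q5 + s*d5)) / 2)) * ((0 + d1 - d2 - d5) / 2) * ((0 + d1 - d2 - d5) / 2) + -(Real.cos ((π - (q2 + s*d2) + (q0 + s*d0) - (q3 + s*d3)) / 2) / Real.sin ((π - (q2 + s*d2) + (q0 + s*d0) - (q3 + s*d3)) / 2)) * ((0 - d2 + d0 - d3) / 2) * ((0 - d2 + d0 - d3) / 2) + -(Real.cos ((π - (q0 + s*d0) + (q1 + s*d1) - (q4 + s*d4)) / 2) / Real.sin ((π - (q0 + s*d0) + (q1 + s*d1) - (q4 + s*d4)) / 2)) * ((0 - d0 + d1 - d4) / 2) * ((0 - d0 + d1 - d4) / 2) + -(Real.cos ((π - (q1 + s*d1) + (q2 + s*d2) - (q5 + s*d5)) / 2) / Real.sin ((π - (q1 + s*d1) + (q2 + s*d2) - (q5 + s*d5)) / 2)) * ((0 - d1 + d2 - d5) / 2) * ((0 - d1 + d2 - d5) / 2) + -(Real.cos ((π + (q2 + s*d2) + (q0 + s*d0) - (q3 + s*d3)) / 2) / Real.sin ((π + (q2 + s*d2) + (q0 + s*d0) - (q3 + s*d3)) / 2)) * ((0 + d2 + d0 - d3)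 / 2) * ((0 + d2 + d0 - d3) / 2) + -(Real.cos ((π + (q0 + s*d0) + (q1 + s*d1) - (q4 + s*d4)) / 2) / Real.sin ((π + (q0 + s*d0) + (q1 + s*d1) - (q4 + s*d4)) / 2)) * ((0 + d0 + d1 - d4) / 2) * ((0 + d0 + d1 - d4) / 2) + -(Real.cos ((π + (q1 + s*d1) + (q2 + s*d2) - (q5 + s*d5)) / 2) / Real.sin ((π + (q1 + s*d1) + (q2 + s*d2) - (q5 + s*d5)) / 2)) * ((0 + d1 + d2 - d5) / 2) * ((0 + d1 + d2 - d5) / 2) + -(Real.cos ((π - (q2 + s*d2) - (q0 + s*d0) - (q3 + s*d3)) / 2) / Real.sin ((π - (q2 + s*d2) - (q0 + s*d0) - (q3 + s*d3)) / 2)) * ((0 - d2 - d0 - d3) / 2) * ((0 - d2 - d0 - d3) / 2) + -(Real.cos ((π - (q0 + s*d0) - (q1 + s*d1) - (q4 + s*d4)) / 2) / Real.sin ((π - (q0 + s*d0) - (q1 + s*d1) - (q4 + s*d4)) / 2)) * ((0 - d0 - d1 - d4) / 2) * ((0 - d0 - d1 - d4) / 2) + -(Real.cos ((π - (q1 + s*d1)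 - (q2 + s*d2) - (q5 + s*d5)) / 2) / Real.sin ((π - (q1 + s*d1) - (q2 + s*d2) - (q5 + s*d5)) / 2)) * ((0 - d1 - d2 - d5) / 2) * ((0 - d1 - d2 - d5) / 2)) / 2

lemma hasDeriv1 (q0 q1 q2 q3 q4 q5 d0 d1 d2 d3 d4 d5 s : ℝ)
    (c0 : 0 < (q0 + s*d0)) (c1 : 0 < (q1 + s*d1)) (c2 : 0 < (q2 + s*d2))
    (c3 : 0 < (q3 + s*d3)) (c4 : 0 < (q4 + s*d4)) (c5 : 0 < (q5 + s*d5))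
    (cs : (q3 + s*d3) + (q4 + s*d4) + (q5 + s*d5) = π)
    (cc1 : (q3 + s*d3) + (q0 + s*d0) + (q2 + s*d2) < π)
    (cc2 : (q4 + s*d4) + (q1 + s*d1) + (q0 + s*d0) < π)
    (cc3 : (q5 + s*d5) + (q2 + s*d2) + (q1 + s*d1) < π) :
    HasDerivAt (fun u => V6 (q0 + u*d0) (q1 + u*d1) (q2 + u*d2) (q3 + u*d3) (q4 + u*d4) (q5 + u*d5))
      (Gfun q0 q1 q2 q3 q4 q5 d0 d1 d2 d3 d4 d5 s) s := by
  have hpi := Real.pi_pos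
  have hA0 : HasDerivAt (fun u : ℝ => q0 + u*d0) d0 s := by
    simpa using (((hasDerivAt_id s).mul_const d0).const_add q0)
  have hA1 : HasDerivAt (fun u : ℝ => q1 + u*d1) d1 s := by
    simpa using (((hasDerivAt_id s).mul_const d1).const_add q1)
  have hA2 : HasDerivAt (fun u : ℝ => q2 + u*d2) d2 s := by
    simpa using (((hasDerivAt_id s).mul_const d2).const_add q2)
  have hA3 : HasDerivAt (fun u : ℝ => q3 + u*d3) d3 s := by
    simpa using (((hasDerivAt_id s).mul_const d3).const_add q3)
  have hA4 : HasDerivAt (fun u : ℝ => q4 + u*d4) d4 s := by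
    simpa using (((hasDerivAt_id s).mul_const d4).const_add q4)
  have hA5 : HasDerivAt (fun u : ℝ => q5 + u*d5) d5 s := by
    simpa using (((hasDerivAt_id s).mul_const d5).const_add q5)
  have hlo1 : 0 < (q3 + s*d3) := by linarith
  have hhi1 : (q3 + s*d3) < π := by linarith
  have hlo2 : 0 < (q4 + s*d4) := by linarith
  have hhi2 : (q4 + s*d4) < π := by linarith
  have hlo3 : 0 < (q5 + s*d5) := by linarith
  have hhi3 : (q5 + s*d5) < π := by linarith
  have hlo4 : 0 < ((π + (q2 + s*d2) - (q0 + s*d0) - (q3 + s*d3)) / 2) := by linarith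
  have hhi4 : ((π + (q2 + s*d2) - (q0 + s*d0) - (q3 + s*d3)) / 2) < π := by linarith
  have hlo5 : 0 < ((π + (q0 + s*d0) - (q1 + s*d1) - (q4 + s*d4)) / 2) := by linarith
  have hhi5 : ((π + (q0 + s*d0) - (q1 + s*d1) - (q4 + s*d4)) / 2) < π := by linarith
  have hlo6 : 0 < ((π + (q1 + s*d1) - (q2 + s*d2) - (q5 + s*d5)) / 2) := by linarith
  have hhi6 : ((π + (q1 + s*d1) - (q2 + s*d2) - (q5 + s*d5)) / 2) < π := by linarith
  have hlo7 : 0 < ((π - (q2 + s*d2) + (q0 + s*d0) - (q3 + s*d3)) / 2) := by linarith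
  have hhi7 : ((π - (q2 + s*d2) + (q0 + s*d0) - (q3 + s*d3)) / 2) < π := by linarith
  have hlo8 : 0 < ((π - (q0 + s*d0) + (q1 + s*d1) - (q4 + s*d4)) / 2) := by linarith
  have hhi8 : ((π - (q0 + s*d0) + (q1 + s*d1) - (q4 + s*d4)) / 2) < π := by linarith
  have hlo9 : 0 < ((π - (q1 + s*d1) + (q2 + s*d2) - (q5 + s*d5)) / 2) := by linarith
  have hhi9 : ((π - (q1 + s*d1) + (q2 + s*d2) - (q5 + s*d5)) / 2) < π := by linarith
  have hlo10 : 0 < ((π + (q2 + s*d2) + (q0 + s*d0) - (q3 + s*d3)) / 2) := by linarith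
  have hhi10 : ((π + (q2 + s*d2) + (q0 + s*d0) - (q3 + s*d3)) / 2) < π := by linarith
  have hlo11 : 0 < ((π + (q0 + s*d0) + (q1 + s*d1) - (q4 + s*d4)) / 2) := by linarith
  have hhi11 : ((π + (q0 + s*d0) + (q1 + s*d1) - (q4 + s*d4)) / 2) < π := by linarith
  have hlo12 : 0 < ((π + (q1 + s*d1) + (q2 + s*d2) - (q5 + s*d5)) / 2) := by linarith
  have hhi12 : ((π + (q1 + s*d1) + (q2 + s*d2) - (q5 + s*d5)) / 2) < π := by linarith
  have hlo13 : 0 < ((π - (q2 + s*d2) - (q0 + s*d0) - (q3 + s*d3)) / 2) := by linarith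
  have hhi13 : ((π - (q2 + s*d2) - (q0 + s*d0) - (q3 + s*d3)) / 2) < π := by linarith
  have hlo14 : 0 < ((π - (q0 + s*d0) - (q1 + s*d1) - (q4 + s*d4)) / 2) := by linarith
  have hhi14 : ((π - (q0 + s*d0) - (q1 + s*d1) - (q4 + s*d4)) / 2) < π := by linarith
  have hlo15 : 0 < ((π - (q1 + s*d1) - (q2 + s*d2) - (q5 + s*d5)) / 2) := by linarith
  have hhi15 : ((π - (q1 + s*d1) - (q2 + s*d2) - (q5 + s*d5)) / 2) < π := by linarith
  have hP4 : HasDerivAt (fun u : ℝ => (π + (q2 + u*d2) - (q0 + u*d0) - (q3 + u*d3)) / 2) ((0 + d2 - d0 - d3) / 2) s :=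
    ((((hasDerivAt_const s π).add hA2).sub hA0).sub hA3).div_const 2
  have hP5 : HasDerivAt (fun u : ℝ => (π + (q0 + u*d0) - (q1 + u*d1) - (q4 + u*d4)) / 2) ((0 + d0 - d1 - d4) / 2) s :=
    ((((hasDerivAt_const s π).add hA0).sub hA1).sub hA4).div_const 2
  have hP6 : HasDerivAt (fun u : ℝ => (π + (q1 + u*d1) - (q2 + u*d2) - (q5 + u*d5)) / 2) ((0 + d1 - d2 - d5) / 2) s :=
    ((((hasDerivAt_const s π).add hA1).sub hA2).sub hA5).div_const 2
  have hP7 : HasDerivAt (fun u : ℝ => (π - (q2 + u*d2) + (q0 + u*d0) - (q3 + u*d3)) / 2) ((0 - d2 + d0 - d3) / 2) s :=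
    ((((hasDerivAt_const s π).sub hA2).add hA0).sub hA3).div_const 2
  have hP8 : HasDerivAt (fun u : ℝ => (π - (q0 + u*d0) + (q1 + u*d1) - (q4 + u*d4)) / 2) ((0 - d0 + d1 - d4) / 2) s :=
    ((((hasDerivAt_const s π).sub hA0).add hA1).sub hA4).div_const 2
  have hP9 : HasDerivAt (fun u : ℝ => (π - (q1 + u*d1) + (q2 + u*d2) - (q5 + u*d5)) / 2) ((0 - d1 + d2 - d5) / 2) s :=
    ((((hasDerivAt_const s π).sub hA1).add hA2).sub hA5).div_const 2
  have hP10 : HasDerivAt (fun u : ℝ => (π + (q2 + u*d2) + (q0 + u*d0) - (q3 + u*d3)) / 2) ((0 + d2 + d0 - d3) / 2) s :=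
    ((((hasDerivAt_const s π).add hA2).add hA0).sub hA3).div_const 2
  have hP11 : HasDerivAt (fun u : ℝ => (π + (q0 + u*d0) + (q1 + u*d1) - (q4 + u*d4)) / 2) ((0 + d0 + d1 - d4) / 2) s :=
    ((((hasDerivAt_const s π).add hA0).add hA1).sub hA4).div_const 2
  have hP12 : HasDerivAt (fun u : ℝ => (π + (q1 + u*d1) + (q2 + u*d2) - (q5 + u*d5)) / 2) ((0 + d1 + d2 - d5) / 2) s :=
    ((((hasDerivAt_const s π).add hA1).add hA2).sub hA5).div_const 2
  have hP13 : HasDerivAt (fun u : ℝ => (π - (q2 + u*d2) - (q0 + u*d0) - (q3 + u*d3)) / 2) ((0 - d2 - d0 - d3) / 2) s :=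
    ((((hasDerivAt_const s π).sub hA2).sub hA0).sub hA3).div_const 2
  have hP14 : HasDerivAt (fun u : ℝ => (π - (q0 + u*d0) - (q1 + u*d1) - (q4 + u*d4)) / 2) ((0 - d0 - d1 - d4) / 2) s :=
    ((((hasDerivAt_const s π).sub hA0).sub hA1).sub hA4).div_const 2
  have hP15 : HasDerivAt (fun u : ℝ => (π - (q1 + u*d1) - (q2 + u*d2) - (q5 + u*d5)) / 2) ((0 - d1 - d2 - d5) / 2) s :=
    ((((hasDerivAt_const s π).sub hA1).sub hA2).sub hA5).div_const 2
  simp only [V6, Gfun]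
  exact (((((((((((((((lobTerm hA3 hlo1 hhi1).add (lobTerm hA4 hlo2 hhi2)).add (lobTerm hA5 hlo3 hhi3)).add (lobTerm hP4 hlo4 hhi4)).add (lobTerm hP5 hlo5 hhi5)).add (lobTerm hP6 hlo6 hhi6)).add (lobTerm hP7 hlo7 hhi7)).add (lobTerm hP8 hlo8 hhi8)).add (lobTerm hP9 hlo9 hhi9)).add (lobTerm hP10 hlo10 hhi10)).add (lobTerm hP11 hlo11 hhi11)).add (lobTerm hP12 hlo12 hhi12)).add (lobTerm hP13 hlo13 hhi13)).add (lobTerm hP14 hlo14 hhi14)).add (lobTerm hP15 hlo15 hhi15)).div_const 2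

lemma hasDeriv2 (q0 q1 q2 q3 q4 q5 d0 d1 d2 d3 d4 d5 s : ℝ)
    (c0 : 0 < (q0 + s*d0)) (c1 : 0 < (q1 + s*d1)) (c2 : 0 < (q2 + s*d2))
    (c3 : 0 < (q3 + s*d3)) (c4 : 0 < (q4 + s*d4)) (c5 : 0 < (q5 + s*d5))
    (cs : (q3 + s*d3) + (q4 + s*d4) + (q5 + s*d5) = π)
    (cc1 : (q3 + s*d3) + (q0 + s*d0) + (q2 + s*d2) < π)
    (cc2 : (q4 + s*d4) + (q1 + s*d1) + (q0 + s*d0) < π)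
    (cc3 : (q5 + s*d5) + (q2 + s*d2) + (q1 + s*d1) < π) :
    HasDerivAt (fun u => Gfun q0 q1 q2 q3 q4 q5 d0 d1 d2 d3 d4 d5 u) (Hfun q0 q1 q2 q3 q4 q5 d0 d1 d2 d3 d4 d5 s) s := by
  have hpi := Real.pi_pos
  have hA0 : HasDerivAt (fun u : ℝ => q0 + u*d0) d0 s := by
    simpa using (((hasDerivAt_id s).mul_const d0).const_add q0)
  have hA1 : HasDerivAt (fun u : ℝ => q1 + u*d1) d1 s := by
    simpa using (((hasDerivAt_id s).mul_const d1).const_add q1)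
  have hA2 : HasDerivAt (fun u : ℝ => q2 + u*d2) d2 s := by
    simpa using (((hasDerivAt_id s).mul_const d2).const_add q2)
  have hA3 : HasDerivAt (fun u : ℝ => q3 + u*d3) d3 s := by
    simpa using (((hasDerivAt_id s).mul_const d3).const_add q3)
  have hA4 : HasDerivAt (fun u : ℝ => q4 + u*d4) d4 s := by
    simpa using (((hasDerivAt_id s).mul_const d4).const_add q4)
  have hA5 : HasDerivAt (fun u : ℝ => q5 + u*d5) d5 s := by
    simpa using (((hasDerivAt_id s).mul_const d5).const_add q5)
  have hlo1 : 0 < (q3 + s*d3) := by linarith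
  have hhi1 : (q3 + s*d3) < π := by linarith
  have hlo2 : 0 < (q4 + s*d4) := by linarith
  have hhi2 : (q4 + s*d4) < π := by linarith
  have hlo3 : 0 < (q5 + s*d5) := by linarith
  have hhi3 : (q5 + s*d5) < π := by linarith
  have hlo4 : 0 < ((π + (q2 + s*d2) - (q0 + s*d0) - (q3 + s*d3)) / 2) := by linarith
  have hhi4 : ((π + (q2 + s*d2) - (q0 + s*d0) - (q3 + s*d3)) / 2) < π := by linarith
  have hlo5 : 0 < ((π + (q0 + s*d0) - (q1 + s*d1) - (q4 + s*d4)) / 2) := by linarith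
  have hhi5 : ((π + (q0 + s*d0) - (q1 + s*d1) - (q4 + s*d4)) / 2) < π := by linarith
  have hlo6 : 0 < ((π + (q1 + s*d1) - (q2 + s*d2) - (q5 + s*d5)) / 2) := by linarith
  have hhi6 : ((π + (q1 + s*d1) - (q2 + s*d2) - (q5 + s*d5)) / 2) < π := by linarith
  have hlo7 : 0 < ((π - (q2 + s*d2) + (q0 + s*d0) - (q3 + s*d3)) / 2) := by linarith
  have hhi7 : ((π - (q2 + s*d2) + (q0 + s*d0) - (q3 + s*d3)) / 2) < π := by linarith
  have hlo8 : 0 < ((π - (q0 + s*d0) + (q1 + s*d1) - (q4 + s*d4)) / 2) := by linarith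
  have hhi8 : ((π - (q0 + s*d0) + (q1 + s*d1) - (q4 + s*d4)) / 2) < π := by linarith
  have hlo9 : 0 < ((π - (q1 + s*d1) + (q2 + s*d2) - (q5 + s*d5)) / 2) := by linarith
  have hhi9 : ((π - (q1 + s*d1) + (q2 + s*d2) - (q5 + s*d5)) / 2) < π := by linarith
  have hlo10 : 0 < ((π + (q2 + s*d2) + (q0 + s*d0) - (q3 + s*d3)) / 2) := by linarith
  have hhi10 : ((π + (q2 + s*d2) + (q0 + s*d0) - (q3 + s*d3)) / 2) < π := by linarith
  have hlo11 : 0 < ((π + (q0 + s*d0) + (q1 + s*d1) - (q4 + s*d4)) / 2) := by linarith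
  have hhi11 : ((π + (q0 + s*d0) + (q1 + s*d1) - (q4 + s*d4)) / 2) < π := by linarith
  have hlo12 : 0 < ((π + (q1 + s*d1) + (q2 + s*d2) - (q5 + s*d5)) / 2) := by linarith
  have hhi12 : ((π + (q1 + s*d1) + (q2 + s*d2) - (q5 + s*d5)) / 2) < π := by linarith
  have hlo13 : 0 < ((π - (q2 + s*d2) - (q0 + s*d0) - (q3 + s*d3)) / 2) := by linarith
  have hhi13 : ((π - (q2 + s*d2) - (q0 + s*d0) - (q3 + s*d3)) / 2) < π := by linarith
  have hlo14 : 0 < ((π - (q0 + s*d0) - (q1 + s*d1) - (q4 + s*d4)) / 2) := by linarith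
  have hhi14 : ((π - (q0 + s*d0) - (q1 + s*d1) - (q4 + s*d4)) / 2) < π := by linarith
  have hlo15 : 0 < ((π - (q1 + s*d1) - (q2 + s*d2) - (q5 + s*d5)) / 2) := by linarith
  have hhi15 : ((π - (q1 + s*d1) - (q2 + s*d2) - (q5 + s*d5)) / 2) < π := by linarith
  have hP4 : HasDerivAt (fun u : ℝ => (π + (q2 + u*d2) - (q0 + u*d0) - (q3 + u*d3)) / 2) ((0 + d2 - d0 - d3) / 2) s :=
    ((((hasDerivAt_const s π).add hA2).sub hA0).sub hA3).div_const 2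
  have hP5 : HasDerivAt (fun u : ℝ => (π + (q0 + u*d0) - (q1 + u*d1) - (q4 + u*d4)) / 2) ((0 + d0 - d1 - d4) / 2) s :=
    ((((hasDerivAt_const s π).add hA0).sub hA1).sub hA4).div_const 2
  have hP6 : HasDerivAt (fun u : ℝ => (π + (q1 + u*d1) - (q2 + u*d2) - (q5 + u*d5)) / 2) ((0 + d1 - d2 - d5) / 2) s :=
    ((((hasDerivAt_const s π).add hA1).sub hA2).sub hA5).div_const 2
  have hP7 : HasDerivAt (fun u : ℝ => (π - (q2 + u*d2) + (q0 + u*d0) - (q3 + u*d3)) / 2) ((0 - d2 + d0 - d3) / 2) s :=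
    ((((hasDerivAt_const s π).sub hA2).add hA0).sub hA3).div_const 2
  have hP8 : HasDerivAt (fun u : ℝ => (π - (q0 + u*d0) + (q1 + u*d1) - (q4 + u*d4)) / 2) ((0 - d0 + d1 - d4) / 2) s :=
    ((((hasDerivAt_const s π).sub hA0).add hA1).sub hA4).div_const 2
  have hP9 : HasDerivAt (fun u : ℝ => (π - (q1 + u*d1) + (q2 + u*d2) - (q5 + u*d5)) / 2) ((0 - d1 + d2 - d5) / 2) s :=
    ((((hasDerivAt_const s π).sub hA1).add hA2).sub hA5).div_const 2
  have hP10 : HasDerivAt (fun u : ℝ => (π + (q2 + u*d2) + (q0 + u*d0) - (q3 + u*d3)) / 2) ((0 + d2 + d0 - d3) / 2) s :=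
    ((((hasDerivAt_const s π).add hA2).add hA0).sub hA3).div_const 2
  have hP11 : HasDerivAt (fun u : ℝ => (π + (q0 + u*d0) + (q1 + u*d1) - (q4 + u*d4)) / 2) ((0 + d0 + d1 - d4) / 2) s :=
    ((((hasDerivAt_const s π).add hA0).add hA1).sub hA4).div_const 2
  have hP12 : HasDerivAt (fun u : ℝ => (π + (q1 + u*d1) + (q2 + u*d2) - (q5 + u*d5)) / 2) ((0 + d1 + d2 - d5) / 2) s :=
    ((((hasDerivAt_const s π).add hA1).add hA2).sub hA5).div_const 2
  have hP13 : HasDerivAt (fun u : ℝ => (π - (q2 + u*d2) - (q0 + u*d0) - (q3 + u*d3)) / 2) ((0 - d2 - d0 - d3) / 2) s :=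
    ((((hasDerivAt_const s π).sub hA2).sub hA0).sub hA3).div_const 2
  have hP14 : HasDerivAt (fun u : ℝ => (π - (q0 + u*d0) - (q1 + u*d1) - (q4 + u*d4)) / 2) ((0 - d0 - d1 - d4) / 2) s :=
    ((((hasDerivAt_const s π).sub hA0).sub hA1).sub hA4).div_const 2
  have hP15 : HasDerivAt (fun u : ℝ => (π - (q1 + u*d1) - (q2 + u*d2) - (q5 + u*d5)) / 2) ((0 - d1 - d2 - d5) / 2) s :=
    ((((hasDerivAt_const s π).sub hA1).sub hA2).sub hA5).div_const 2
  simp only [Gfun, Hfun]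
  exact (((((((((((((((logTerm hA3 hlo1 hhi1).add (logTerm hA4 hlo2 hhi2)).add (logTerm hA5 hlo3 hhi3)).add (logTerm hP4 hlo4 hhi4)).add (logTerm hP5 hlo5 hhi5)).add (logTerm hP6 hlo6 hhi6)).add (logTerm hP7 hlo7 hhi7)).add (logTerm hP8 hlo8 hhi8)).add (logTerm hP9 hlo9 hhi9)).add (logTerm hP10 hlo10 hhi10)).add (logTerm hP11 hlo11 hhi11)).add (logTerm hP12 hlo12 hhi12)).add (logTerm hP13 hlo13 hhi13)).add (logTerm hP14 hlo14 hhi14)).add (logTerm hP15 hlo15 hhi15)).div_const 2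

lemma Hneg (q0 q1 q2 q3 q4 q5 d0 d1 d2 d3 d4 d5 s : ℝ)
    (c0 : 0 < (q0 + s*d0)) (c1 : 0 < (q1 + s*d1)) (c2 : 0 < (q2 + s*d2))
    (c3 : 0 < (q3 + s*d3)) (c4 : 0 < (q4 + s*d4)) (c5 : 0 < (q5 + s*d5))
    (cs : (q3 + s*d3) + (q4 + s*d4) + (q5 + s*d5) = π)
    (cc1 : (q3 + s*d3) + (q0 + s*d0) + (q2 + s*d2) < π)
    (cc2 : (q4 + s*d4) + (q1 + s*d1) + (q0 + s*d0) < π)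
    (cc3 : (q5 + s*d5) + (q2 + s*d2) + (q1 + s*d1) < π)
    (hd : d3 + d4 + d5 = 0)
    (hne : ¬(d0 = 0 ∧ d1 = 0 ∧ d2 = 0 ∧ d3 = 0 ∧ d4 = 0 ∧ d5 = 0)) :
    Hfun q0 q1 q2 q3 q4 q5 d0 d1 d2 d3 d4 d5 s < 0 := by
  have hcore := core (q0 + s*d0) (q1 + s*d1) (q2 + s*d2) (q3 + s*d3) (q4 + s*d4) (q5 + s*d5) d0 d1 d2 d3 d4 d5
    c0 c1 c2 c3 c4 c5 cs cc1 cc2 cc3 hd hne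
  have heq : Hfun q0 q1 q2 q3 q4 q5 d0 d1 d2 d3 d4 d5 s = -(d3^2 * (Real.cos (q3 + s*d3) / Real.sin (q3 + s*d3)) + d4^2 * (Real.cos (q4 + s*d4) / Real.sin (q4 + s*d4)) + d5^2 * (Real.cos (q5 + s*d5) / Real.sin (q5 + s*d5)) + ((d2 - d0 - d3) / 2)^2 * (Real.cos ((π + (q2 + s*d2) - (q0 + s*d0) - (q3 + s*d3)) / 2) / Real.sin ((π + (q2 + s*d2) - (q0 + s*d0) - (q3 + s*d3)) / 2)) + ((d0 - d1 - d4) / 2)^2 * (Real.cos ((π + (q0 + s*d0) - (q1 + s*d1) - (q4 + s*d4)) / 2) / Real.sin ((π + (q0 + s*d0) - (q1 + s*d1) - (q4 + s*d4)) / 2)) + ((d1 - d2 - d5) / 2)^2 * (Real.cos ((π + (q1 + s*d1) - (q2 + s*d2) - (q5 + s*d5)) / 2) / Real.sin ((π + (q1 + s*d1) - (q2 + s*d2) - (q5 + s*d5)) / 2)) + ((-d2 + d0 - d3) / 2)^2 * (Real.cos ((π - (q2 + s*d2) + (q0 + s*d0) - (q3 + s*d3)) / 2) / Real.sin ((π -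 (q2 + s*d2) + (q0 + s*d0) - (q3 + s*d3)) / 2)) + ((-d0 + d1 - d4) / 2)^2 * (Real.cos ((π - (q0 + s*d0) + (q1 + s*d1) - (q4 + s*d4)) / 2) / Real.sin ((π - (q0 + s*d0) + (q1 + s*d1) - (q4 + s*d4)) / 2)) + ((-d1 + d2 - d5) / 2)^2 * (Real.cos ((π - (q1 + s*d1) + (q2 + s*d2) - (q5 + s*d5)) / 2) / Real.sin ((π - (q1 + s*d1) + (q2 + s*d2) - (q5 + s*d5)) / 2)) + ((d2 + d0 - d3) / 2)^2 * (Real.cos ((π + (q2 + s*d2) + (q0 + s*d0) - (q3 + s*d3)) / 2) / Real.sin ((π + (q2 + s*d2) + (q0 + s*d0) - (q3 + s*d3)) / 2)) + ((d0 + d1 - d4) / 2)^2 * (Real.cos ((π + (q0 + s*d0) + (q1 + s*d1) - (q4 + s*d4)) / 2) / Real.sin ((π + (q0 + s*d0) + (q1 + s*d1) - (q4 + s*d4)) / 2)) + ((d1 + d2 - d5) / 2)^2 * (Real.cos ((π + (q1 + s*d1) + (q2 + s*d2) - (q5 + s*d5)) / 2) / Real.sin ((π + (q1 + s*d1) + (q2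 + s*d2) - (q5 + s*d5)) / 2)) + ((-d2 - d0 - d3) / 2)^2 * (Real.cos ((π - (q2 + s*d2) - (q0 + s*d0) - (q3 + s*d3)) / 2) / Real.sin ((π - (q2 + s*d2) - (q0 + s*d0) - (q3 + s*d3)) / 2)) + ((-d0 - d1 - d4) / 2)^2 * (Real.cos ((π - (q0 + s*d0) - (q1 + s*d1) - (q4 + s*d4)) / 2) / Real.sin ((π - (q0 + s*d0) - (q1 + s*d1) - (q4 + s*d4)) / 2)) + ((-d1 - d2 - d5) / 2)^2 * (Real.cos ((π - (q1 + s*d1) - (q2 + s*d2) - (q5 + s*d5)) / 2) / Real.sin ((π - (q1 + s*d1) - (q2 + s*d2) - (q5 + s*d5)) / 2))) / 2 := by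
    simp only [Hfun]; ring
  rw [heq]
  linarith

lemma seg {a b s : ℝ} (ha : 0 < a) (hb : 0 < b) (h0 : 0 ≤ s) (h1 : s ≤ 1) :
    0 < (1 - s) * a + s * b := by
  rcases eq_or_lt_of_le h1 with h | h
  · subst h; simpa using hb
  · have := mul_pos (by linarith : (0:ℝ) < 1 - s) ha
    nlinarith [mul_nonneg h0 hb.le]

set_option maxHeartbeats 2000000 in
lemma main_aux (q0 q1 q2 q3 q4 q5 d0 d1 d2 d3 d4 d5 : ℝ)
    (hq0 : 0 < q0)
    (hq1 : 0 < q1)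
    (hq2 : 0 < q2)
    (hq3 : 0 < q3)
    (hq4 : 0 < q4)
    (hq5 : 0 < q5)
    (hqs : q3 + q4 + q5 = π)
    (hqc1 : q3 + q0 + q2 < π) (hqc2 : q4 + q1 + q0 < π) (hqc3 : q5 + q2 + q1 < π)
    (hp0 : 0 < q0 + d0)
    (hp1 : 0 < q1 + d1)
    (hp2 : 0 < q2 + d2)
    (hp3 : 0 < q3 + d3)
    (hp4 : 0 < q4 + d4)
    (hp5 : 0 < q5 + d5)
    (hps : q3 + d3 + (q4 + d4) + (q5 + d5) = π)
    (hpc1 : q3 + d3 + (q0 + d0) + (q2 + d2) < π)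
    (hpc2 : q4 + d4 + (q1 + d1) + (q0 + d0) < π)
    (hpc3 : q5 + d5 + (q2 + d2) + (q1 + d1) < π)
    (hne : ¬(d0 = 0 ∧ d1 = 0 ∧ d2 = 0 ∧ d3 = 0 ∧ d4 = 0 ∧ d5 = 0)) :
    StrictConcaveOn ℝ (Set.Icc (0:ℝ) 1)
      (fun s => V6 (q0 + s*d0) (q1 + s*d1) (q2 + s*d2) (q3 + s*d3) (q4 + s*d4) (q5 + s*d5)) := by
  have hpi := Real.pi_pos
  have hdsum : d3 + d4 + d5 = 0 := by linarith
  have hcond : ∀ s : ℝ, 0 ≤ s → s ≤ 1 →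
      (0 < (q0 + s*d0) ∧ 0 < (q1 + s*d1) ∧ 0 < (q2 + s*d2) ∧ 0 < (q3 + s*d3) ∧ 0 < (q4 + s*d4) ∧ 0 < (q5 + s*d5))
      ∧ ((q3 + s*d3) + (q4 + s*d4) + (q5 + s*d5) = π)
      ∧ ((q3 + s*d3) + (q0 + s*d0) + (q2 + s*d2) < π)
      ∧ ((q4 + s*d4) + (q1 + s*d1) + (q0 + s*d0) < π)
      ∧ ((q5 + s*d5) + (q2 + s*d2) + (q1 + s*d1) < π) := by
    intro s h0 h1
    refine ⟨⟨?_, ?_, ?_, ?_, ?_, ?_⟩, ?_, ?_, ?_, ?_⟩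
    · have := seg hq0 hp0 h0 h1; nlinarith
    · have := seg hq1 hp1 h0 h1; nlinarith
    · have := seg hq2 hp2 h0 h1; nlinarith
    · have := seg hq3 hp3 h0 h1; nlinarith
    · have := seg hq4 hp4 h0 h1; nlinarith
    · have := seg hq5 hp5 h0 h1; nlinarith
    · linear_combination hqs + s * hdsum
    · have := seg (a := π - (q3 + q0 + q2)) (b := π - (q3 + d3 + (q0 + d0) + (q2 + d2)))
        (by linarith) (by linarith) h0 h1
      nlinarith
    · have := seg (a := π - (q4 + q1 + q0)) (b := π - (q4 + d4 + (q1 + d1) + (q0 + d0)))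
        (by linarith) (by linarith) h0 h1
      nlinarith
    · have := seg (a := π - (q5 + q2 + q1)) (b := π - (q5 + d5 + (q2 + d2) + (q1 + d1)))
        (by linarith) (by linarith) h0 h1
      nlinarith
  have hder : ∀ s ∈ Set.Icc (0:ℝ) 1,
      HasDerivAt (fun s => V6 (q0 + s*d0) (q1 + s*d1) (q2 + s*d2) (q3 + s*d3) (q4 + s*d4) (q5 + s*d5)) (Gfun q0 q1 q2 q3 q4 q5 d0 d1 d2 d3 d4 d5 s) s := by
    intro s hs
    obtain ⟨⟨c0, c1, c2, c3, c4, c5⟩, cs, cc1, cc2, cc3⟩ := hcond s hs.1 hs.2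
    exact hasDeriv1 q0 q1 q2 q3 q4 q5 d0 d1 d2 d3 d4 d5 s c0 c1 c2 c3 c4 c5 cs cc1 cc2 cc3
  have hcontF : ContinuousOn (fun s => V6 (q0 + s*d0) (q1 + s*d1) (q2 + s*d2) (q3 + s*d3) (q4 + s*d4) (q5 + s*d5)) (Set.Icc (0:ℝ) 1) :=
    fun s hs => ((hder s hs).continuousAt).continuousWithinAt
  apply strictConcaveOn_of_deriv2_neg (convex_Icc 0 1) hcontF
  intro x hx
  rw [interior_Icc] at hx
  have hg2 : ∀ s ∈ Set.Ioo (0:ℝ) 1, deriv (fun s => V6 (q0 + s*d0) (q1 + s*d1) (q2 + s*d2) (q3 + s*d3) (q4 + s*d4) (q5 + s*d5)) s = Gfun q0 q1 q2 q3 q4 q5 d0 d1 d2 d3 d4 d5 s :=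
    fun s hs => (hder s (Set.Ioo_subset_Icc_self hs)).deriv
  obtain ⟨⟨c0, c1, c2, c3, c4, c5⟩, cs, cc1, cc2, cc3⟩ := hcond x hx.1.le hx.2.le
  have h2 : deriv (Gfun q0 q1 q2 q3 q4 q5 d0 d1 d2 d3 d4 d5) x = Hfun q0 q1 q2 q3 q4 q5 d0 d1 d2 d3 d4 d5 x :=
    (hasDeriv2 q0 q1 q2 q3 q4 q5 d0 d1 d2 d3 d4 d5 x c0 c1 c2 c3 c4 c5 cs cc1 cc2 cc3).deriv
  have heq : deriv (deriv (fun s => V6 (q0 + s*d0) (q1 + s*d1) (q2 + s*d2) (q3 + s*d3) (q4 + s*d4) (q5 + s*d5))) x = deriv (Gfun q0 q1 q2 q3 q4 q5 d0 d1 d2 d3 d4 d5) x := by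
    apply Filter.EventuallyEq.deriv_eq
    filter_upwards [Ioo_mem_nhds hx.1 hx.2] with s hs using hg2 s hs
  show deriv (deriv (fun s => V6 (q0 + s*d0) (q1 + s*d1) (q2 + s*d2) (q3 + s*d3) (q4 + s*d4) (q5 + s*d5))) x < 0
  rw [heq, h2]
  exact Hneg q0 q1 q2 q3 q4 q5 d0 d1 d2 d3 d4 d5 x c0 c1 c2 c3 c4 c5 cs cc1 cc2 cc3 hdsum hne


set_option maxHeartbeats 2000000 in
theorem V_strictConcaveOn :
    ∀ p ∈ D6, ∀ q ∈ D6, p ≠ q → ∀ t : ℝ, 0 < t → t < 1 →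
      t * VV p + (1 - t) * VV q < VV (t • p + (1 - t) • q) := by
  intro p hp q hq hpq t ht0 ht1
  obtain ⟨hppos, hps, hpc1, hpc2, hpc3⟩ := hp
  obtain ⟨hqpos, hqs, hqc1, hqc2, hqc3⟩ := hq
  have hne : ¬(p 0 - q 0 = 0 ∧ p 1 - q 1 = 0 ∧ p 2 - q 2 = 0 ∧ p 3 - q 3 = 0
      ∧ p 4 - q 4 = 0 ∧ p 5 - q 5 = 0) := by
    rintro ⟨e0, e1, e2, e3, e4, e5⟩
    apply hpq
    funext i
    fin_cases i
    · show p 0 = q 0; linarith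
    · show p 1 = q 1; linarith
    · show p 2 = q 2; linarith
    · show p 3 = q 3; linarith
    · show p 4 = q 4; linarith
    · show p 5 = q 5; linarith
  have hsc := main_aux (q 0) (q 1) (q 2) (q 3) (q 4) (q 5)
    (p 0 - q 0) (p 1 - q 1) (p 2 - q 2) (p 3 - q 3) (p 4 - q 4) (p 5 - q 5)
    (hqpos 0) (hqpos 1) (hqpos 2) (hqpos 3) (hqpos 4) (hqpos 5)
    hqs hqc1 hqc2 hqc3
    (by have := hppos 0; linarith) (by have := hppos 1; linarith) (by have := hppos 2; linarith)
    (by have := hppos 3; linarith) (by have := hppos 4; linarith) (by have := hppos 5; linarith)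
    (by linarith) (by linarith) (by linarith) (by linarith) hne
  have h01 : (1:ℝ) ∈ Set.Icc (0:ℝ) 1 := by norm_num
  have h00 : (0:ℝ) ∈ Set.Icc (0:ℝ) 1 := by norm_num
  have key := hsc.2 h01 h00 one_ne_zero (show (0:ℝ) < t from ht0)
    (show (0:ℝ) < 1 - t by linarith) (show t + (1 - t) = 1 by ring)
  simp only [smul_eq_mul, mul_one, mul_zero, add_zero, one_mul, zero_mul] at key
  have hb : ∀ i : Fin 6, q i + (p i - q i) = p i := fun i => by ring
  rw [hb 0, hb 1, hb 2, hb 3, hb 4, hb 5] at key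
  have hc : ∀ i : Fin 6, (t • p + (1 - t) • q) i = q i + t * (p i - q i) := fun i => by
    simp only [Pi.add_apply, Pi.smul_apply, smul_eq_mul]; ring
  simp only [VV, hc 0, hc 1, hc 2, hc 3, hc 4, hc 5]
  exact key
end

section
/- Suppose p = (α₁₂,α₂₃,α₃₁,γ₁,γ₂,γ₃) ∈ Δ̄∖Δ is α-degenerate (all five of its associated triples lie in Δ₀). Then γ₁ > 0, γ₂ > 0, γ₃ > 0, the strict inequalities γ₁+α₁₂+α₃₁ < π, γ₂+α₂₃+α₁₂ < π, γ₃+α₃₁+α₂₃ < π hold, and at least one of α₁₂, α₂₃, α₃₁ equals 0. -/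
open Real

/-- Membership of a triple in Δ₀. -/
def InD0 (x y z : ℝ) : Prop := 0 < x ∧ 0 < y ∧ 0 < z ∧ x + y + z = π

/-- Membership of `(α₁₂,α₂₃,α₃₁,γ₁,γ₂,γ₃)` in Δ. -/
def InD (a12 a23 a31 g1 g2 g3 : ℝ) : Prop :=
  0 < a12 ∧ 0 < a23 ∧ 0 < a31 ∧ 0 < g1 ∧ 0 < g2 ∧ 0 < g3 ∧
  g1 + g2 + g3 = π ∧
  g1 + a12 + a31 < π ∧ g2 + a23 + a12 < π ∧ g3 + a31 + a23 < π

/-- Membership of `(α₁₂,α₂₃,α₃₁,γ₁,γ₂,γ₃)` in the closure Δ̄. -/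
def InDbar (a12 a23 a31 g1 g2 g3 : ℝ) : Prop :=
  0 ≤ a12 ∧ 0 ≤ a23 ∧ 0 ≤ a31 ∧ 0 ≤ g1 ∧ 0 ≤ g2 ∧ 0 ≤ g3 ∧
  g1 + g2 + g3 = π ∧
  g1 + a12 + a31 ≤ π ∧ g2 + a23 + a12 ≤ π ∧ g3 + a31 + a23 ≤ π

/-- The hypothesis is `(γᵢ, μᵢ, νᵢ) ∈ Δ₀`; the face inequality comes from `νᵢ > 0`. -/
theorem InD0.pos_and_add_lt_pi {g a b : ℝ}
    (h : InD0 g ((π + b + a - g) / 2) ((π - b - a - g) / 2)) :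
    0 < g ∧ g + a + b < π := by
  obtain ⟨hg, -, hν, -⟩ := h
  exact ⟨hg, by linarith⟩

theorem InDbar.alpha_eq_zero_of_not_inD {a12 a23 a31 g1 g2 g3 : ℝ}
    (hbar : InDbar a12 a23 a31 g1 g2 g3) (hni : ¬ InD a12 a23 a31 g1 g2 g3)
    (hg1 : 0 < g1) (hg2 : 0 < g2) (hg3 : 0 < g3)
    (l1 : g1 + a12 + a31 < π) (l2 : g2 + a23 + a12 < π) (l3 : g3 + a31 + a23 < π) :
    a12 = 0 ∨ a23 = 0 ∨ a31 = 0 := by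
  obtain ⟨b12, b23, b31, -, -, -, hsum, -⟩ := hbar
  by_contra! h
  obtain ⟨n12, n23, n31⟩ := h
  exact hni ⟨b12.lt_of_ne n12.symm, b23.lt_of_ne n23.symm, b31.lt_of_ne n31.symm,
    hg1, hg2, hg3, hsum, l1, l2, l3⟩

theorem alpha_degenerate_structure_general (a12 a23 a31 g1 g2 g3 : ℝ)
    (hbar : InDbar a12 a23 a31 g1 g2 g3) (hni : ¬ InD a12 a23 a31 g1 g2 g3)
    (h3 : InD0 g1 ((π + a31 + a12 - g1) / 2) ((π - a31 - a12 - g1) / 2))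
    (h4 : InD0 g2 ((π + a12 + a23 - g2) / 2) ((π - a12 - a23 - g2) / 2))
    (h5 : InD0 g3 ((π + a23 + a31 - g3) / 2) ((π - a23 - a31 - g3) / 2)) :
    0 < g1 ∧ 0 < g2 ∧ 0 < g3 ∧
    g1 + a12 + a31 < π ∧ g2 + a23 + a12 < π ∧ g3 + a31 + a23 < π ∧
    (a12 = 0 ∨ a23 = 0 ∨ a31 = 0) := by
  obtain ⟨hg1, l1⟩ := h3.pos_and_add_lt_pi
  obtain ⟨hg2, l2⟩ := h4.pos_and_add_lt_pi
  obtain ⟨hg3, l3⟩ := h5.pos_and_add_lt_pi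
  exact ⟨hg1, hg2, hg3, l1, l2, l3,
    hbar.alpha_eq_zero_of_not_inD hni hg1 hg2 hg3 l1 l2 l3⟩

theorem alpha_degenerate_structure (a12 a23 a31 g1 g2 g3 : ℝ)
    (hbar : InDbar a12 a23 a31 g1 g2 g3) (hni : ¬ InD a12 a23 a31 g1 g2 g3)
    (h1 : InD0 ((π + a31 - a12 - g1) / 2) ((π + a12 - a23 - g2) / 2)
      ((π + a23 - a31 - g3) / 2))
    (h2 : InD0 ((π - a31 + a12 - g1) / 2) ((π - a12 + a23 - g2) / 2)
      ((π - a23 + a31 - g3) / 2))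
    (h3 : InD0 g1 ((π + a31 + a12 - g1) / 2) ((π - a31 - a12 - g1) / 2))
    (h4 : InD0 g2 ((π + a12 + a23 - g2) / 2) ((π - a12 - a23 - g2) / 2))
    (h5 : InD0 g3 ((π + a23 + a31 - g3) / 2) ((π - a23 - a31 - g3) / 2)) :
    0 < g1 ∧ 0 < g2 ∧ 0 < g3 ∧
    g1 + a12 + a31 < π ∧ g2 + a23 + a12 < π ∧ g3 + a31 + a23 < π ∧
    (a12 = 0 ∨ a23 = 0 ∨ a31 = 0) :=
  alpha_degenerate_structure_general a12 a23 a31 g1 g2 g3 hbar hni h3 h4 h5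
end
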